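/- arXiv:1109.6521 — 10 statements merged into one kernel-verified Lean document; each statement's English description precedes it below -/
import Mathlib

section
/- For every integer m ≥ 2, the cyclic matching sequencibility of the complete graph K_{2m} equals m - 1. -/
/-- Two edges of a graph (as unordered pairs of vertices) are *disjoint*
if they share no vertex. -/
def edgesDisjoint {V : Type*} (e₁ e₂ : Sym2 V) : Prop :=
  ∀ v : V, v ∈ e₁ → v ∉ e₂

/-- The number of edges of a graph `G`. -/
noncomputable def edgeCount {V : Type*} (G : SimpleGraph V) : ℕ :=
  Nat.card G.edgeSet

/-- A linear ordering `f` of the edges of `G` has matching number at least `d`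
if every `d` consecutive edges in the ordering are pairwise disjoint. -/
def LinearGood {V : Type*} (G : SimpleGraph V)
    (f : Fin (edgeCount G) ≃ G.edgeSet) (d : ℕ) : Prop :=
  ∀ j k : Fin (edgeCount G), j ≠ k → (j : ℕ) < (k : ℕ) + d → (k : ℕ) < (j : ℕ) + d →
    edgesDisjoint (f j : Sym2 V) (f k : Sym2 V)

/-- The matching sequencibility `ms G`: the largest `d` (necessarily at most the
number of edges) for which some linear ordering of the edges of `G` has every
`d` consecutive edges forming a matching. -/
noncomputable def ms {V : Type*} (G : SimpleGraph V) : ℕ :=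
  sSup {d : ℕ | d ≤ edgeCount G ∧ ∃ f : Fin (edgeCount G) ≃ G.edgeSet, LinearGood G f d}

/-- A cyclic ordering `f : ZMod N ≃ edges of G` has cyclic matching number at least `d`
if every `d` cyclically consecutive edges in the ordering are pairwise disjoint. -/
def CyclicGood {V : Type*} (G : SimpleGraph V) {N : ℕ}
    (f : ZMod N ≃ G.edgeSet) (d : ℕ) : Prop :=
  ∀ (i : ZMod N) (j k : ℕ), j < d → k < d → j ≠ k →
    edgesDisjoint (f (i + (j : ZMod N)) : Sym2 V) (f (i + (k : ZMod N)) : Sym2 V)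

/-- The cyclic matching sequencibility `cms G`: the largest `d` for which some
cyclic ordering of the edges of `G` has every `d` cyclically consecutive edges
forming a matching. -/
noncomputable def cms {V : Type*} (G : SimpleGraph V) : ℕ :=
  sSup {d : ℕ | ∃ f : ZMod (edgeCount G) ≃ G.edgeSet, CyclicGood G f d}

/-!
Upper bound: if every `m` cyclically consecutive edges of a graph on `2m` vertices form a
matching, each such window is a perfect matching. The windows at positions `0, …, m-1` and
`1, …, m` share `m-1` edges, so the edges at positions `0` and `m` cover the same two vertices and
coincide; hence the number of edges divides `m`, which is impossible for `K_{2m}` with its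
`m(2m-1) > m` edges.

Lower bound: take the vertices of `K_{2m}` to be `ℤ/(2m-1)` and a point `∞`, and list the rounds
`r = 0, 1, 2, …` of the round-robin 1-factorization one after the other, round `r` in the order
`{∞, r}, {r+1, r-1}, …, {r+m-1, r-m+1}`. A window of `m-1` consecutive edges either lies in one
round, which is a perfect matching, or pairs the edge `k₁` of round `r` with an edge `k₂ ≤ k₁ - 2`
of round `r+1`, and these two edges are disjoint.
-/

variable {V W : Type*}

theorem edgesDisjoint.symm {e₁ e₂ : Sym2 V} (h : edgesDisjoint e₁ e₂) : edgesDisjoint e₂ e₁ :=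
  fun v hv₂ hv₁ => h v hv₁ hv₂

theorem edgesDisjoint_mk {a b c d : V} (hac : a ≠ c) (had : a ≠ d) (hbc : b ≠ c) (hbd : b ≠ d) :
    edgesDisjoint s(a, b) s(c, d) := by
  rintro v hv hv'
  rw [Sym2.mem_iff] at hv hv'
  rcases hv with rfl | rfl <;> rcases hv' with rfl | rfl <;> contradiction

theorem edgesDisjoint.map {f : V → W} (hf : Function.Injective f) {e₁ e₂ : Sym2 V}
    (h : edgesDisjoint e₁ e₂) : edgesDisjoint (e₁.map f) (e₂.map f) := by
  rintro _ hv₁ hv₂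
  obtain ⟨a, ha, rfl⟩ := Sym2.mem_map.1 hv₁
  obtain ⟨b, hb, hab⟩ := Sym2.mem_map.1 hv₂
  exact h a ha (hf hab ▸ hb)

theorem Sym2.eq_of_forall_mem_of_not_isDiag {z w : Sym2 V} (hz : ¬ z.IsDiag)
    (h : ∀ v ∈ z, v ∈ w) : z = w := by
  induction z using Sym2.ind with
  | _ a b =>
    exact ((Sym2.mem_and_mem_iff (by simpa using hz)).1
      ⟨h a (Sym2.mem_mk_left a b), h b (Sym2.mem_mk_right a b)⟩).symm

theorem edgeCount_top [Fintype V] : edgeCount (⊤ : SimpleGraph V) = (Fintype.card V).choose 2 := by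
  classical
  rw [edgeCount, Nat.card_eq_fintype_card, ← SimpleGraph.edgeFinset_card,
    SimpleGraph.card_edgeFinset_top_eq_card_choose_two]

theorem exists_mem_of_pairwise_edgesDisjoint [Fintype V] {m : ℕ} (hV : Fintype.card V = 2 * m)
    (e : ℕ → Sym2 V) (he : ∀ t < m, ¬ (e t).IsDiag)
    (hdisj : ∀ s < m, ∀ t < m, s ≠ t → edgesDisjoint (e s) (e t)) (v : V) :
    ∃ t < m, v ∈ e t := by
  classical
  set cover := (Finset.range m).biUnion fun t => (e t).toFinset
  have hcard : cover.card = Fintype.card V := by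
    rw [Finset.card_biUnion, Finset.sum_congr rfl fun t ht =>
      Sym2.card_toFinset_of_not_isDiag _ (he t (Finset.mem_range.1 ht))]
    · simp [hV, mul_comm]
    · intro s hs t ht hst
      exact Finset.disjoint_left.2 fun v hvs hvt => hdisj s (Finset.mem_range.1 hs) t
        (Finset.mem_range.1 ht) hst v (Sym2.mem_toFinset.1 hvs) (Sym2.mem_toFinset.1 hvt)
  have hv : v ∈ cover := (Finset.eq_univ_of_card _ hcard).symm ▸ Finset.mem_univ v
  simpa [cover] using hv

namespace CyclicGood

variable {G : SimpleGraph V} {N : ℕ} {f : ZMod N ≃ G.edgeSet}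

theorem mono {d d' : ℕ} (hf : CyclicGood G f d) (h : d' ≤ d) : CyclicGood G f d' :=
  fun i j k hj hk hjk => hf i j k (hj.trans_le h) (hk.trans_le h) hjk

theorem natCast_eq_zero [Fintype V] {m : ℕ} (hV : Fintype.card V = 2 * m)
    (hf : CyclicGood G f m) : (m : ZMod N) = 0 := by
  rcases Nat.eq_zero_or_pos m with rfl | hm
  · exact Nat.cast_zero
  set e : ℕ → Sym2 V := fun t => f t
  have he : ∀ t, ¬ (e t).IsDiag := fun t => G.not_isDiag_of_mem_edgeSet (f t).2
  have hshift : ∀ t, 0 < t → (1 : ZMod N) + ((t - 1 : ℕ) : ZMod N) = t := fun t ht => by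
    rw [Nat.cast_sub ht, Nat.cast_one, add_sub_cancel]
  have hcover := exists_mem_of_pairwise_edgesDisjoint hV e (fun t _ => he t)
    (fun s hs t ht hst => by simpa [e] using hf 0 s t hs ht hst)
  have hsub : ∀ v ∈ e m, v ∈ e 0 := by
    intro v hv
    obtain ⟨t, ht, hvt⟩ := hcover v
    rcases Nat.eq_zero_or_pos t with rfl | htpos
    · exact hvt
    · have hdisj := hf 1 (m - 1) (t - 1) (by omega) (by omega) (by omega)
      rw [hshift m hm, hshift t htpos] at hdisj
      exact absurd hvt (hdisj v hv)
  have hfm : f m = f (0 : ℕ) := Subtype.ext (Sym2.eq_of_forall_mem_of_not_isDiag (he m) hsub)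
  simpa using f.injective hfm

theorem lt_of_card_eq [Fintype V] {m d : ℕ} (hV : Fintype.card V = 2 * m) (hm : 0 < m)
    (hmN : m < N) (hf : CyclicGood G f d) : d < m := by
  by_contra! hd
  have hdvd : N ∣ m := (ZMod.natCast_eq_zero_iff _ _).1 ((hf.mono hd).natCast_eq_zero hV)
  exact (Nat.le_of_dvd hm hdvd).not_gt hmN

end CyclicGood

theorem exists_cyclicGood_of_iso {G : SimpleGraph V} {G' : SimpleGraph W} (e : G ≃g G') {d : ℕ}
    (h : ∃ f : ZMod (edgeCount G) ≃ G.edgeSet, CyclicGood G f d) :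
    ∃ f : ZMod (edgeCount G') ≃ G'.edgeSet, CyclicGood G' f d := by
  obtain ⟨f, hf⟩ := h
  rw [← show edgeCount G = edgeCount G' from Nat.card_congr e.mapEdgeSet]
  exact ⟨f.trans e.mapEdgeSet, fun i j k hj hk hjk => (hf i j k hj hk hjk).map e.injective⟩

theorem exists_cyclicGood_of_periodic [Finite V] {G : SimpleGraph V} {d : ℕ} (g : ℕ → Sym2 V)
    (hg_mem : ∀ i, g i ∈ G.edgeSet) (hg_per : Function.Periodic g (edgeCount G))
    (hg_inj : Set.InjOn g (Set.Iio (edgeCount G)))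
    (hg_disj : ∀ b t, 0 < t → t < d → edgesDisjoint (g b) (g (b + t))) :
    ∃ f : ZMod (edgeCount G) ≃ G.edgeSet, CyclicGood G f d := by
  set N := edgeCount G
  have : NeZero N := ⟨Nat.card_ne_zero.2 ⟨⟨⟨g 0, hg_mem 0⟩⟩, inferInstance⟩⟩
  set F : ZMod N → G.edgeSet := fun z => ⟨g z.val, hg_mem _⟩
  have hF : ∀ x : ℕ, (F x : Sym2 V) = g x := fun x => by
    simp only [F, ZMod.val_natCast, hg_per.map_mod_nat]
  have hF_inj : F.Injective := fun z w h =>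
    ZMod.val_injective N (hg_inj (ZMod.val_lt z) (ZMod.val_lt w) (congrArg Subtype.val h))
  have hF_bij : F.Bijective := hF_inj.bijective_of_nat_card_le (by simp [N, edgeCount])
  have hwindow : ∀ (i : ZMod N) (j k : ℕ), j < k → k < d →
      edgesDisjoint (F (i + j) : Sym2 V) (F (i + k)) := by
    intro i j k hjk hk
    have hcast : ∀ j : ℕ, i + j = ((i.val + j : ℕ) : ZMod N) := fun j => by simp
    rw [hcast, hcast, hF, hF, show i.val + k = i.val + j + (k - j) by omega]
    exact hg_disj _ _ (by omega) (by omega)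
  refine ⟨Equiv.ofBijective F hF_bij, fun i j k hj hk hjk => ?_⟩
  rcases hjk.lt_or_gt with h | h
  · exact hwindow i j k h hk
  · exact (hwindow i k j h hj).symm

theorem edgeCount_top_of_card_eq [Fintype V] {m : ℕ} (hV : Fintype.card V = 2 * m) :
    edgeCount (⊤ : SimpleGraph V) = m * (2 * m - 1) := by
  rw [edgeCount_top, hV, Nat.choose_two_right, mul_assoc, Nat.mul_div_cancel_left _ two_pos]

namespace RoundRobin

variable {m : ℕ}

theorem eq_zero_of_intCast_eq_zero {c : ℤ} (h : (c : ZMod (2 * m + 1)) = 0) (hc : -(2 * m) ≤ c)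
    (hc' : c ≤ 2 * m) : c = 0 :=
  Int.eq_zero_of_abs_lt_dvd ((ZMod.intCast_zmod_eq_zero_iff_dvd _ _).1 h)
    (by rw [abs_lt]; push_cast; omega)

/-- The vertex set of `K_{2m+2}` is taken to be `ZMod (2m+1)` plus a point at infinity `none`;
`vert r c` is the finite vertex `r + c`. -/
def vert (r : ZMod (2 * m + 1)) (c : ℤ) : Option (ZMod (2 * m + 1)) :=
  some (r + c)

theorem vert_ne_none (r : ZMod (2 * m + 1)) (c : ℤ) : vert r c ≠ none :=
  Option.some_ne_none _

theorem vert_add_one (r : ZMod (2 * m + 1)) (c : ℤ) : vert (r + 1) c = vert r (c + 1) := by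
  rw [vert, vert, Int.cast_add, Int.cast_one, add_right_comm, add_assoc]

theorem vert_ne_vert (r : ZMod (2 * m + 1)) {c₁ c₂ : ℤ} (h₁ : -m ≤ c₁) (h₁' : c₁ ≤ m)
    (h₂ : -m ≤ c₂) (h₂' : c₂ ≤ m) (hne : c₁ ≠ c₂) : vert r c₁ ≠ vert r c₂ := by
  intro h
  have hcast : ((c₁ - c₂ : ℤ) : ZMod (2 * m + 1)) = 0 := by
    rw [vert, vert, Option.some_inj, add_right_inj] at h
    rw [Int.cast_sub, h, sub_self]
  have := eq_zero_of_intCast_eq_zero hcast (by omega) (by omega)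
  omega

/-- Edge `k` of round `r` of the round-robin 1-factorization of `K_{2m+2}`. -/
def edge (r : ZMod (2 * m + 1)) (k : ℕ) : Sym2 (Option (ZMod (2 * m + 1))) :=
  if k = 0 then s(none, vert r 0) else s(vert r k, vert r (-k))

variable {r : ZMod (2 * m + 1)} {k₁ k₂ : ℕ}

theorem edge_not_isDiag (hk : k₁ ≤ m) : ¬ (edge r k₁).IsDiag := by
  unfold edge
  split_ifs
  · exact (vert_ne_none r 0).symm
  · exact vert_ne_vert r (by omega) (by omega) (by omega) (by omega) (by omega)

/- All finite vertices met below are `vert r c` with `|c| ≤ m`, where `vert r` is injective. -/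
theorem edgesDisjoint_edge (hk₁ : k₁ ≤ m) (hk₂ : k₂ ≤ m) (hne : k₁ ≠ k₂) :
    edgesDisjoint (edge r k₁) (edge r k₂) := by
  unfold edge
  split_ifs <;> first
    | omega
    | refine edgesDisjoint_mk ?_ ?_ ?_ ?_ <;> first
      | exact vert_ne_none _ _
      | exact (vert_ne_none _ _).symm
      | exact vert_ne_vert r (by omega) (by omega) (by omega) (by omega) (by omega)

theorem edgesDisjoint_edge_add_one (hk₁ : k₁ ≤ m) (hk : k₂ + 2 ≤ k₁) :
    edgesDisjoint (edge r k₁) (edge (r + 1) k₂) := by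
  unfold edge
  split_ifs <;> first
    | omega
    | simp only [vert_add_one]
      refine edgesDisjoint_mk ?_ ?_ ?_ ?_ <;> first
      | exact vert_ne_none _ _
      | exact (vert_ne_none _ _).symm
      | exact vert_ne_vert r (by omega) (by omega) (by omega) (by omega) (by omega)

theorem eq_and_eq_of_edge_eq {r₁ r₂ : ZMod (2 * m + 1)} (hk₁ : k₁ ≤ m) (hk₂ : k₂ ≤ m)
    (h : edge r₁ k₁ = edge r₂ k₂) : r₁ = r₂ ∧ k₁ = k₂ := by
  unfold edge vert at h
  split_ifs at h
  · simp_all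
  · simp at h
  · simp at h
  · rcases Sym2.eq_iff.1 h with ⟨hp, hm⟩ | ⟨hp, hm⟩ <;>
      simp only [Option.some_inj, Int.cast_neg, Int.cast_natCast] at hp hm
    · have hcast : ((2 * k₁ - 2 * k₂ : ℤ) : ZMod (2 * m + 1)) = 0 := by
        push_cast
        linear_combination hp - hm
      have := eq_zero_of_intCast_eq_zero hcast (by omega) (by omega)
      obtain rfl : k₁ = k₂ := by omega
      exact ⟨add_right_cancel hp, rfl⟩
    · -- `2` is invertible modulo `2m + 1`, with inverse `m + 1`
      have hodd : (2 * m + 1 : ZMod (2 * m + 1)) = 0 := by exact_mod_cast ZMod.natCast_self _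
      have hr : r₁ = r₂ := by
        linear_combination (m + 1 : ZMod (2 * m + 1)) * (hp + hm) - (r₁ - r₂) * hodd
      have hcast : ((k₁ + k₂ : ℤ) : ZMod (2 * m + 1)) = 0 := by
        push_cast
        linear_combination hp - hr
      have := eq_zero_of_intCast_eq_zero hcast (by omega) (by omega)
      omega

variable (m) in
def seq (i : ℕ) : Sym2 (Option (ZMod (2 * m + 1))) :=
  edge ((i / (m + 1) : ℕ) : ZMod (2 * m + 1)) (i % (m + 1))

theorem seq_mul_add (q k : ℕ) (hk : k ≤ m) : seq m ((m + 1) * q + k) = edge (q : ZMod _) k := by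
  rw [seq, Nat.mul_add_div m.succ_pos, Nat.mul_add_mod, Nat.div_eq_of_lt (by omega),
    Nat.mod_eq_of_lt (by omega), add_zero]

theorem seq_periodic : Function.Periodic (seq m) ((m + 1) * (2 * m + 1)) := by
  intro i
  rw [seq, seq, Nat.add_mul_div_left _ _ m.succ_pos, Nat.add_mul_mod_self_left, Nat.cast_add,
    ZMod.natCast_self, add_zero]

theorem seq_injOn : Set.InjOn (seq m) (Set.Iio ((m + 1) * (2 * m + 1))) := by
  intro i hi j hj h
  obtain ⟨hq, hk⟩ := eq_and_eq_of_edge_eq (Nat.lt_succ_iff.1 (Nat.mod_lt _ m.succ_pos))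
    (Nat.lt_succ_iff.1 (Nat.mod_lt _ m.succ_pos)) h
  have hq : i / (m + 1) = j / (m + 1) := by
    simpa [ZMod.val_natCast, Nat.mod_eq_of_lt (Nat.div_lt_of_lt_mul hi),
      Nat.mod_eq_of_lt (Nat.div_lt_of_lt_mul hj)] using congrArg ZMod.val hq
  rw [← Nat.div_add_mod i (m + 1), ← Nat.div_add_mod j (m + 1), hq, hk]

theorem seq_edgesDisjoint (b t : ℕ) (ht₀ : 0 < t) (ht : t < m) :
    edgesDisjoint (seq m b) (seq m (b + t)) := by
  obtain ⟨q, k, hk, rfl⟩ : ∃ q k, k ≤ m ∧ b = (m + 1) * q + k :=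
    ⟨b / (m + 1), b % (m + 1), Nat.lt_succ_iff.1 (Nat.mod_lt _ m.succ_pos),
      (Nat.div_add_mod b (m + 1)).symm⟩
  rw [seq_mul_add q k hk]
  by_cases hkt : k + t ≤ m
  · rw [add_assoc, seq_mul_add q (k + t) hkt]
    exact edgesDisjoint_edge hk hkt (by omega)
  · rw [show (m + 1) * q + k + t = (m + 1) * (q + 1) + (k + t - (m + 1)) by ring_nf; omega,
      seq_mul_add _ _ (by omega), Nat.cast_succ]
    exact edgesDisjoint_edge_add_one hk (by omega)

theorem exists_cyclicGood (m : ℕ) :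
    ∃ f : ZMod (edgeCount (⊤ : SimpleGraph (Option (ZMod (2 * m + 1))))) ≃
      (⊤ : SimpleGraph (Option (ZMod (2 * m + 1)))).edgeSet, CyclicGood ⊤ f m := by
  have hN : edgeCount (⊤ : SimpleGraph (Option (ZMod (2 * m + 1)))) = (m + 1) * (2 * m + 1) := by
    rw [edgeCount_top_of_card_eq (m := m + 1) (by simp [ZMod.card]; ring)]
    congr 1
  refine exists_cyclicGood_of_periodic (seq m) (fun i => ?_) (hN ▸ seq_periodic)
    (hN ▸ seq_injOn) seq_edgesDisjoint
  rw [SimpleGraph.edgeSet_top]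
  exact edge_not_isDiag (Nat.lt_succ_iff.1 (Nat.mod_lt _ m.succ_pos))

end RoundRobin

/-- For every integer `m ≥ 2`, `cms (K_{2m}) = m - 1`. -/
theorem cms_completeGraph_even (m : ℕ) (hm : 2 ≤ m) :
    cms (⊤ : SimpleGraph (Fin (2 * m))) = m - 1 := by
  have hcard : Fintype.card (Option (ZMod (2 * (m - 1) + 1))) = Fintype.card (Fin (2 * m)) := by
    simp only [Fintype.card_option, ZMod.card, Fintype.card_fin]
    omega
  have hcount : m < edgeCount (⊤ : SimpleGraph (Fin (2 * m))) := by
    rw [edgeCount_top_of_card_eq (Fintype.card_fin _)]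
    exact (Nat.lt_mul_iff_one_lt_right (by omega)).2 (by omega)
  refine IsGreatest.csSup_eq ⟨?_, ?_⟩
  · exact exists_cyclicGood_of_iso (.completeGraph (Fintype.equivOfCardEq hcard))
      (RoundRobin.exists_cyclicGood (m - 1))
  · rintro d ⟨f, hf⟩
    have := hf.lt_of_card_eq (Fintype.card_fin _) (by omega) hcount
    omega
end

section
/- For every integer n ≥ 3, the matching sequencibility of the complete graph K_n equals ⌊(n-1)/2⌋. -/

lemma modc (a N : ℕ) (h : a < 2*N) : a % N = a ∨ (N ≤ a ∧ a % N + N = a) := by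
  rcases Nat.lt_or_ge a N with h1 | h1
  · left; exact Nat.mod_eq_of_lt h1
  · right
    refine ⟨h1, ?_⟩
    rw [Nat.mod_eq_sub_mod h1, Nat.mod_eq_of_lt (by omega)]
    omega

lemma edgesDisjoint_symm {V : Type*} {e₁ e₂ : Sym2 V} (h : edgesDisjoint e₁ e₂) :
    edgesDisjoint e₂ e₁ := fun v h2 h1 => h v h1 h2

lemma disj_of_vals {V : Type*} (a b c d : V) (h1 : a ≠ c) (h2 : a ≠ d) (h3 : b ≠ c)
    (h4 : b ≠ d) : edgesDisjoint s(a,b) s(c,d) := by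
  intro v hv hv'
  rw [Sym2.mem_iff] at hv hv'
  rcases hv with rfl|rfl <;> rcases hv' with rfl|rfl <;> simp_all

lemma edgeCount_top_s4 (n : ℕ) : edgeCount (⊤ : SimpleGraph (Fin n)) = n.choose 2 := by
  rw [edgeCount, Nat.card_eq_card_toFinset]
  have : (⊤ : SimpleGraph (Fin n)).edgeSet.toFinset = (⊤ : SimpleGraph (Fin n)).edgeFinset := rfl
  rw [this, SimpleGraph.card_edgeFinset_top_eq_card_choose_two, Fintype.card_fin]

lemma ms_ge_of_good (n d : ℕ) (g : ℕ → Sym2 (Fin n))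
    (hmem : ∀ t < n.choose 2, g t ∈ (⊤ : SimpleGraph (Fin n)).edgeSet)
    (hinj : ∀ t < n.choose 2, ∀ s < n.choose 2, g t = g s → t = s)
    (hgood : ∀ t s : ℕ, t < s → s < n.choose 2 → s < t + d → edgesDisjoint (g t) (g s))
    (hd : d ≤ n.choose 2) : d ≤ ms (⊤ : SimpleGraph (Fin n)) := by
  have hc := edgeCount_top_s4 n
  set G := (⊤ : SimpleGraph (Fin n)) with hG
  have hFmem : ∀ t : Fin (edgeCount G), g t.val ∈ G.edgeSet := fun t => hmem t.val (hc ▸ t.isLt)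
  set F : Fin (edgeCount G) → G.edgeSet := fun t => ⟨g t.val, hFmem t⟩ with hF
  have hFinj : Function.Injective F := by
    intro a b hab
    have : g a.val = g b.val := congrArg Subtype.val hab
    exact Fin.ext (hinj a.val (hc ▸ a.isLt) b.val (hc ▸ b.isLt) this)
  have hFbij : Function.Bijective F := by
    rw [Nat.bijective_iff_injective_and_card]
    exact ⟨hFinj, by simp [edgeCount]⟩
  set f := Equiv.ofBijective F hFbij with hf
  have hgoodf : LinearGood G f d := by
    intro j k hjk h1 h2
    have hval : (j : ℕ) ≠ (k : ℕ) := fun h => hjk (Fin.ext h)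
    rcases Nat.lt_or_ge (j : ℕ) (k : ℕ) with h | h
    · exact hgood j.val k.val h (hc ▸ k.isLt) h2
    · exact edgesDisjoint_symm (hgood k.val j.val (by omega) (hc ▸ j.isLt) h1)
  have hmemS : d ∈ {d : ℕ | d ≤ edgeCount G ∧ ∃ f : Fin (edgeCount G) ≃ G.edgeSet, LinearGood G f d} :=
    ⟨by omega, ⟨f, hgoodf⟩⟩
  exact le_csSup ⟨edgeCount G, fun x hx => hx.1⟩ hmemS

-- an edge of K_n, as a Sym2, equals s(a,b) with a ≠ b
lemma edge_repr {n : ℕ} {e : Sym2 (Fin n)} (he : e ∈ (⊤ : SimpleGraph (Fin n)).edgeSet) :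
    ∃ a b : Fin n, a ≠ b ∧ e = s(a,b) := by
  obtain ⟨⟨a, b⟩, hab⟩ := Quot.exists_rep e
  have heq : e = s(a, b) := hab.symm
  subst heq
  rw [SimpleGraph.mem_edgeSet, SimpleGraph.top_adj] at he
  exact ⟨a, b, he, rfl⟩

lemma vertexFinset_card {n : ℕ} {e : Sym2 (Fin n)}
    (he : e ∈ (⊤ : SimpleGraph (Fin n)).edgeSet) :
    (Finset.univ.filter (· ∈ e)).card = 2 := by
  obtain ⟨a, b, hne, rfl⟩ := edge_repr he
  have : (Finset.univ.filter (· ∈ s(a,b))) = {a, b} := by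
    ext v
    simp [Sym2.mem_iff]
  rw [this, Finset.card_pair hne]

lemma counting_bound (n r : ℕ) (e : ℕ → Sym2 (Fin n))
    (hmem : ∀ i < r, e i ∈ (⊤ : SimpleGraph (Fin n)).edgeSet)
    (hdisj : ∀ i j, i < j → j < r → edgesDisjoint (e i) (e j)) : 2 * r ≤ n := by
  classical
  set S : ℕ → Finset (Fin n) := fun i => Finset.univ.filter (· ∈ e i) with hS
  have hdisjS : ∀ i ∈ Finset.range r, ∀ j ∈ Finset.range r, i ≠ j → Disjoint (S i) (S j) := by
    intro i hi j hj hij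
    rw [Finset.disjoint_left]
    intro v hvi hvj
    simp only [hS, Finset.mem_filter] at hvi hvj
    rcases Nat.lt_or_ge i j with h | h
    · exact hdisj i j h (Finset.mem_range.mp hj) v hvi.2 hvj.2
    · exact hdisj j i (by omega) (Finset.mem_range.mp hi) v hvj.2 hvi.2
  have hcard : ((Finset.range r).biUnion S).card = 2 * r := by
    rw [Finset.card_biUnion hdisjS]
    rw [Finset.sum_congr rfl (fun i hi => vertexFinset_card (hmem i (Finset.mem_range.mp hi)))]
    simp [Nat.mul_comm]
  calc 2 * r = ((Finset.range r).biUnion S).card := hcard.symm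
    _ ≤ (Finset.univ : Finset (Fin n)).card := Finset.card_le_univ _
    _ = n := by simp


lemma ms_le_main (n : ℕ) (hn : 3 ≤ n) : ms (⊤ : SimpleGraph (Fin n)) ≤ (n - 1) / 2 := by
  classical
  set G := (⊤ : SimpleGraph (Fin n)) with hG
  have hc := edgeCount_top_s4 n
  have hn0 : 0 < n := by omega
  apply csSup_le
  · refine ⟨0, by omega, ?_⟩
    have f0 : Fin (edgeCount G) ≃ G.edgeSet :=
      (Fintype.equivFinOfCardEq (by rw [← Nat.card_eq_fintype_card]; rfl)).symm
    exact ⟨f0, fun j k hjk h1 h2 => by omega⟩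
  · rintro d ⟨hdc, f, hf⟩
    by_contra hcon
    push_neg at hcon
    obtain ⟨k, hk1, hk2⟩ : ∃ k, 1 ≤ k ∧ (n = 2*k+1 ∨ n = 2*k+2) := ⟨(n-1)/2, by omega⟩
    have hchoose : n.choose 2 = n * (n-1) / 2 := by rw [Nat.choose_two_right]
    have junk : Sym2 (Fin n) := s(⟨0, hn0⟩, ⟨0, hn0⟩)
    rcases hk2 with h | h
    · -- odd
      have hkd : k + 1 ≤ d := by omega
      have hEC : edgeCount G = (2*k+1)*k := by
        rw [hc, hchoose, h]
        have h1 : 2*k+1-1 = 2*k := by omega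
        rw [h1]
        have h2 : (2*k+1) * (2*k) = ((2*k+1)*k)*2 := by ring
        omega
      have h3 : 3*k ≤ (2*k+1)*k := Nat.mul_le_mul_right k (by omega)
      have hlt : ∀ i : ℕ, i < k + 1 → i < edgeCount G := by intro i hi; rw [hEC]; omega
      have := counting_bound n (k+1)
        (fun i => if hi : i < k+1 then (f ⟨i, hlt i hi⟩ : Sym2 (Fin n)) else s(⟨0, hn0⟩, ⟨0, hn0⟩))
        (fun i hi => by simp only [dif_pos hi]; exact (f ⟨i, hlt i hi⟩).2)
        (fun i j hij hj => by
          simp only [dif_pos (by omega : i < k+1), dif_pos hj]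
          refine hf ⟨i, _⟩ ⟨j, _⟩ (fun hh => by simp [Fin.ext_iff] at hh; omega) ?_ ?_ <;>
            simp only [] <;> omega)
      omega
    · -- even
      have hkd : k + 1 ≤ d := by omega
      have hEC : edgeCount G = (2*k+1)*(k+1) := by
        rw [hc, hchoose, h]
        have h1 : 2*k+2-1 = 2*k+1 := by omega
        rw [h1]
        have h2 : (2*k+2) * (2*k+1) = ((2*k+1)*(k+1))*2 := by ring
        omega
      have h3 : 3*(k+1) ≤ (2*k+1)*(k+1) := Nat.mul_le_mul_right (k+1) (by omega)
      have hlt : ∀ i : ℕ, i < k + 2 → i < edgeCount G := by intro i hi; rw [hEC]; omega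
      rcases Nat.lt_or_ge (k+1) d with hbig | heq
      · have := counting_bound n (k+2)
          (fun i => if hi : i < k+2 then (f ⟨i, hlt i hi⟩ : Sym2 (Fin n)) else s(⟨0, hn0⟩, ⟨0, hn0⟩))
          (fun i hi => by simp only [dif_pos hi]; exact (f ⟨i, hlt i hi⟩).2)
          (fun i j hij hj => by
            simp only [dif_pos (by omega : i < k+2), dif_pos hj]
            refine hf ⟨i, _⟩ ⟨j, _⟩ (fun hh => by simp [Fin.ext_iff] at hh; omega) ?_ ?_ <;>
              simp only [] <;> omega)
        omega
      · -- d = k+1: sliding argument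
        have hd : d = k + 1 := by omega
        subst hd
        set g : ℕ → Sym2 (Fin n) := fun i =>
          if hi : i < k+2 then (f ⟨i, hlt i hi⟩ : Sym2 (Fin n)) else s(⟨0, hn0⟩, ⟨0, hn0⟩) with hgdef
        have hgval : ∀ i (hi : i < k+2), g i = (f ⟨i, hlt i hi⟩ : Sym2 (Fin n)) := by
          intro i hi; simp only [hgdef, dif_pos hi]
        set S : ℕ → Finset (Fin n) := fun i => Finset.univ.filter (· ∈ g i) with hSdef
        have hdisjS : ∀ i ∈ Finset.range (k+1), ∀ j ∈ Finset.range (k+1), i ≠ j →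
            Disjoint (S i) (S j) := by
          intro i hi j hj hij
          rw [Finset.mem_range] at hi hj
          rw [Finset.disjoint_left]
          intro v hvi hvj
          simp only [hSdef, Finset.mem_filter, hgval i (by omega), hgval j (by omega)] at hvi hvj
          exact hf ⟨i, hlt i (by omega)⟩ ⟨j, hlt j (by omega)⟩
            (fun hh => by simp [Fin.ext_iff] at hh; omega)
            (by simp only []; omega) (by simp only []; omega) v hvi.2 hvj.2
        have hcard : ((Finset.range (k+1)).biUnion S).card = 2 * (k+1) := by
          rw [Finset.card_biUnion hdisjS]
          rw [Finset.sum_congr rfl (fun i hi => by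
            have hi' := Finset.mem_range.mp hi
            show (S i).card = 2
            simp only [hSdef, hgval i (by omega)]
            exact vertexFinset_card (f ⟨i, hlt i (by omega)⟩).2)]
          simp [Nat.mul_comm]
        have huniv : (Finset.range (k+1)).biUnion S = Finset.univ := by
          apply Finset.eq_univ_of_card
          rw [hcard, Fintype.card_fin]; omega
        have hcover : ∀ v : Fin n, ∃ i, i < k + 1 ∧ v ∈ g i := by
          intro v
          have hv : v ∈ (Finset.range (k+1)).biUnion S := huniv ▸ Finset.mem_univ v
          rw [Finset.mem_biUnion] at hv
          obtain ⟨i, hi, hvi⟩ := hv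
          rw [Finset.mem_range] at hi
          simp only [hSdef, Finset.mem_filter] at hvi
          exact ⟨i, hi, hvi.2⟩
        obtain ⟨a, b, hab, hrepr⟩ := edge_repr (f ⟨k+1, hlt _ (by omega)⟩).2
        have key : ∀ v : Fin n, v ∈ (f ⟨k+1, hlt _ (by omega)⟩ : Sym2 (Fin n)) →
            v ∈ (f ⟨0, hlt 0 (by omega)⟩ : Sym2 (Fin n)) := by
          intro v hv
          obtain ⟨i, hi, hvi⟩ := hcover v
          rw [hgval i (by omega)] at hvi
          rcases Nat.eq_zero_or_pos i with rfl | hpos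
          · exact hvi
          · exfalso
            exact hf ⟨i, hlt i (by omega)⟩ ⟨k+1, hlt _ (by omega)⟩
              (fun hh => by simp [Fin.ext_iff] at hh; omega)
              (by simp only []; omega) (by simp only []; omega) v hvi hv
        have ha : a ∈ (f ⟨0, hlt 0 (by omega)⟩ : Sym2 (Fin n)) := key a (by rw [hrepr]; simp)
        have hb : b ∈ (f ⟨0, hlt 0 (by omega)⟩ : Sym2 (Fin n)) := key b (by rw [hrepr]; simp)
        have heq0 : (f ⟨0, hlt 0 (by omega)⟩ : Sym2 (Fin n)) = s(a,b) :=
          ((Sym2.mem_and_mem_iff hab).mp ⟨ha, hb⟩)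
        have heq1 : f ⟨0, hlt 0 (by omega)⟩ = f ⟨k+1, hlt _ (by omega)⟩ :=
          Subtype.ext (by rw [heq0, hrepr])
        have := f.injective heq1
        simp [Fin.ext_iff] at this

lemma modc' (a N : ℕ) (h0 : 0 < N) (h : a < 2*N) :
    (a < N ∧ a % N = a) ∨ (N ≤ a ∧ a < 2*N ∧ a % N + N = a) := by
  rcases Nat.lt_or_ge a N with h1 | h1
  · exact Or.inl ⟨h1, Nat.mod_eq_of_lt h1⟩
  · refine Or.inr ⟨h1, h, ?_⟩
    rw [Nat.mod_eq_sub_mod h1, Nat.mod_eq_of_lt (by omega)]; omega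

def oddVert (k x : ℕ) : Fin (2*k+1) :=
  ⟨x % (2*k) % (2*k+1), Nat.mod_lt _ (by omega)⟩

def oddInf (k : ℕ) : Fin (2*k+1) := ⟨2*k, by omega⟩

lemma oddVert_val (k : ℕ) (hk : 1 ≤ k) (x : ℕ) : (oddVert k x).val = x % (2*k) := by
  simp only [oddVert]
  exact Nat.mod_eq_of_lt (lt_trans (Nat.mod_lt _ (by omega)) (by omega))

lemma oddInf_val (k : ℕ) : (oddInf k).val = 2*k := rfl

def oddEdge (k t : ℕ) : Sym2 (Fin (2*k+1)) :=
  if t % (2*k+1) = 0 then s(oddInf k, oddVert k (t / (2*k+1)))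
  else if t % (2*k+1) < k then
    s(oddVert k (t / (2*k+1) + t % (2*k+1)), oddVert k (t / (2*k+1) + 2*k - t % (2*k+1)))
  else if t % (2*k+1) = k then s(oddInf k, oddVert k (t / (2*k+1) + k))
  else s(oddVert k (t / (2*k+1) + t % (2*k+1) - k),
         oddVert k (t / (2*k+1) + 2*k - (t % (2*k+1) - (k+1))))

lemma vne (k x y : ℕ) (hk : 1 ≤ k) (hx : x < 4*k) (hy : y < 4*k)
    (h1 : x ≠ y) (h2 : x + 2*k ≠ y) (h3 : y + 2*k ≠ x) : oddVert k x ≠ oddVert k y := by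
  intro h
  rw [Fin.ext_iff, oddVert_val k hk, oddVert_val k hk] at h
  have a1 := modc' x (2*k) (by omega) (by omega)
  have a2 := modc' y (2*k) (by omega) (by omega)
  omega

lemma vne_inf (k x : ℕ) (hk : 1 ≤ k) : oddVert k x ≠ oddInf k := by
  intro h
  rw [Fin.ext_iff, oddVert_val k hk, oddInf_val] at h
  have := Nat.mod_lt x (show 0 < 2*k by omega)
  omega

lemma veq (k x y : ℕ) (hk : 1 ≤ k) (hx : x < 4*k) (hy : y < 4*k)
    (h : oddVert k x = oddVert k y) : x = y ∨ x + 2*k = y ∨ y + 2*k = x := by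
  rw [Fin.ext_iff, oddVert_val k hk, oddVert_val k hk] at h
  have a1 := modc' x (2*k) (by omega) (by omega)
  have a2 := modc' y (2*k) (by omega) (by omega)
  omega

lemma odd_divmod (k m p : ℕ) (hp : p < 2*k+1) :
    ((2*k+1)*m+p)/(2*k+1) = m ∧ ((2*k+1)*m+p)%(2*k+1) = p := by
  constructor
  · rw [Nat.mul_add_div (by omega), Nat.div_eq_of_lt hp]
    omega
  · rw [Nat.mul_add_mod, Nat.mod_eq_of_lt hp]

lemma form_A (k m p : ℕ) (hp : p < 2*k+1) (h : p = 0) :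
    oddEdge k ((2*k+1)*m+p) = s(oddInf k, oddVert k m) := by
  obtain ⟨hd, hm⟩ := odd_divmod k m p hp
  rw [oddEdge, hm, hd, if_pos h]

lemma form_B (k m p : ℕ) (hp : p < 2*k+1) (h0 : 0 < p) (h1 : p < k) :
    oddEdge k ((2*k+1)*m+p) = s(oddVert k (m+p), oddVert k (m+2*k-p)) := by
  obtain ⟨hd, hm⟩ := odd_divmod k m p hp
  rw [oddEdge, hm, hd, if_neg (by omega), if_pos h1]

lemma form_C (k m p : ℕ) (hk : 1 ≤ k) (hp : p < 2*k+1) (h : p = k) :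
    oddEdge k ((2*k+1)*m+p) = s(oddInf k, oddVert k (m+k)) := by
  obtain ⟨hd, hm⟩ := odd_divmod k m p hp
  rw [oddEdge, hm, hd, if_neg (by omega), if_neg (by omega), if_pos h]

lemma form_D (k m p : ℕ) (hk : 1 ≤ k) (hp : p < 2*k+1) (h0 : k < p) :
    oddEdge k ((2*k+1)*m+p) = s(oddVert k (m+p-k), oddVert k (m+2*k-(p-(k+1)))) := by
  obtain ⟨hd, hm⟩ := odd_divmod k m p hp
  rw [oddEdge, hm, hd, if_neg (by omega), if_neg (by omega), if_neg (by omega)]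

lemma odd_block_rel (N m p m' p' w : ℕ) (hp : p < N) (hp' : p' < N)
    (h1 : N*m + p < N*m' + p') (h2 : N*m' + p' < N*m + p + w) (hw : w ≤ N) :
    (m' = m ∧ p < p' ∧ p' < p + w) ∨ (m' = m+1 ∧ p' + N < p + w) := by
  have hle : m ≤ m' := by
    by_contra hc
    push_neg at hc
    have h3 : m' + 1 ≤ m := hc
    have h4 := Nat.mul_le_mul_left N h3
    have h5 : N*(m'+1) = N*m' + N := by ring
    omega
  have hle2 : m' ≤ m + 1 := by
    by_contra hc
    push_neg at hc
    have h3 : m + 2 ≤ m' := hc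
    have h4 := Nat.mul_le_mul_left N h3
    have h5 : N*(m+2) = N*m + 2*N := by ring
    omega
  have hcase : m' = m ∨ m' = m + 1 := by omega
  have h5 : N*(m+1) = N*m + N := by ring
  rcases hcase with rfl | rfl
  · left; omega
  · right; omega

lemma odd_mem (k : ℕ) (hk : 1 ≤ k) (t : ℕ) (ht : t < (2*k+1)*k) :
    oddEdge k t ∈ (⊤ : SimpleGraph (Fin (2*k+1))).edgeSet := by
  obtain ⟨m, p, hplt, rfl⟩ : ∃ m p, p < 2*k+1 ∧ t = (2*k+1)*m + p :=
    ⟨t/(2*k+1), t%(2*k+1), Nat.mod_lt _ (by omega), (Nat.div_add_mod t (2*k+1)).symm⟩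
  have hmk : m < k := by
    by_contra hc
    push_neg at hc
    have := Nat.mul_le_mul_left (2*k+1) hc
    omega
  clear ht
  rcases (show p = 0 ∨ (0 < p ∧ p < k) ∨ p = k ∨ (k < p ∧ p < 2*k+1) from by omega) with
    hz1 | hz1 | hz1 | hz1
  · rw [form_A k m p hplt hz1]
    rw [SimpleGraph.mem_edgeSet, SimpleGraph.top_adj]
    have : (m) % (2*k) = m := Nat.mod_eq_of_lt (by omega)
    simp only [Ne, Fin.ext_iff, oddVert_val k hk, oddInf_val]
    omega
  · rw [form_B k m p hplt hz1.1 hz1.2]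
    rw [SimpleGraph.mem_edgeSet, SimpleGraph.top_adj]
    have := modc' (m+p) (2*k) (by omega) (by omega)
    have := modc' (m+2*k-p) (2*k) (by omega) (by omega)
    simp only [Ne, Fin.ext_iff, oddVert_val k hk, oddInf_val]
    omega
  · rw [form_C k m p hk hplt hz1]
    rw [SimpleGraph.mem_edgeSet, SimpleGraph.top_adj]
    have : (m+k) % (2*k) = m+k := Nat.mod_eq_of_lt (by omega)
    simp only [Ne, Fin.ext_iff, oddVert_val k hk, oddInf_val]
    omega
  · rw [form_D k m p hk hplt hz1.1]
    rw [SimpleGraph.mem_edgeSet, SimpleGraph.top_adj]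
    have : (m+p-k) % (2*k) = m+p-k := Nat.mod_eq_of_lt (by omega)
    have := modc' (m+2*k-(p-(k+1))) (2*k) (by omega) (by omega)
    simp only [Ne, Fin.ext_iff, oddVert_val k hk, oddInf_val]
    omega

lemma odd_disj (k : ℕ) (hk : 1 ≤ k) (t s : ℕ) (hts : t < s) (hs : s < (2*k+1)*k)
    (hwin : s < t + k) : edgesDisjoint (oddEdge k t) (oddEdge k s) := by
  obtain ⟨m, p, hplt, rfl⟩ : ∃ m p, p < 2*k+1 ∧ t = (2*k+1)*m + p :=
    ⟨t/(2*k+1), t%(2*k+1), Nat.mod_lt _ (by omega), (Nat.div_add_mod t (2*k+1)).symm⟩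
  obtain ⟨m', p', hplt', rfl⟩ : ∃ m' p', p' < 2*k+1 ∧ s = (2*k+1)*m' + p' :=
    ⟨s/(2*k+1), s%(2*k+1), Nat.mod_lt _ (by omega), (Nat.div_add_mod s (2*k+1)).symm⟩
  have hmk' : m' < k := by
    by_contra hc
    push_neg at hc
    have := Nat.mul_le_mul_left (2*k+1) hc
    omega
  have hrel := odd_block_rel (2*k+1) m p m' p' k hplt hplt' hts (by omega) (by omega)
  have hmk : m < k := by omega
  clear hts hs hwin
  rcases (show p = 0 ∨ (0 < p ∧ p < k) ∨ p = k ∨ (k < p ∧ p < 2*k+1) from by omega) with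
    hz1 | hz1 | hz1 | hz1 <;>
  rcases (show p' = 0 ∨ (0 < p' ∧ p' < k) ∨ p' = k ∨ (k < p' ∧ p' < 2*k+1) from by omega) with
    hz2 | hz2 | hz2 | hz2
  · rw [form_A k m p hplt hz1]
    rw [form_A k m' p' hplt' hz2]
    apply disj_of_vals <;>
      first
        | exact vne_inf k _ hk
        | exact Ne.symm (vne_inf k _ hk)
        | (exfalso; omega)
        | (apply vne k _ _ hk <;> omega)
  · rw [form_A k m p hplt hz1]
    rw [form_B k m' p' hplt' hz2.1 hz2.2]
    apply disj_of_vals <;>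
      first
        | exact vne_inf k _ hk
        | exact Ne.symm (vne_inf k _ hk)
        | (exfalso; omega)
        | (apply vne k _ _ hk <;> omega)
  · rw [form_A k m p hplt hz1]
    rw [form_C k m' p' hk hplt' hz2]
    apply disj_of_vals <;>
      first
        | exact vne_inf k _ hk
        | exact Ne.symm (vne_inf k _ hk)
        | (exfalso; omega)
        | (apply vne k _ _ hk <;> omega)
  · rw [form_A k m p hplt hz1]
    rw [form_D k m' p' hk hplt' hz2.1]
    apply disj_of_vals <;>
      first
        | exact vne_inf k _ hk
        | exact Ne.symm (vne_inf k _ hk)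
        | (exfalso; omega)
        | (apply vne k _ _ hk <;> omega)
  · rw [form_B k m p hplt hz1.1 hz1.2]
    rw [form_A k m' p' hplt' hz2]
    apply disj_of_vals <;>
      first
        | exact vne_inf k _ hk
        | exact Ne.symm (vne_inf k _ hk)
        | (exfalso; omega)
        | (apply vne k _ _ hk <;> omega)
  · rw [form_B k m p hplt hz1.1 hz1.2]
    rw [form_B k m' p' hplt' hz2.1 hz2.2]
    apply disj_of_vals <;>
      first
        | exact vne_inf k _ hk
        | exact Ne.symm (vne_inf k _ hk)
        | (exfalso; omega)
        | (apply vne k _ _ hk <;> omega)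
  · rw [form_B k m p hplt hz1.1 hz1.2]
    rw [form_C k m' p' hk hplt' hz2]
    apply disj_of_vals <;>
      first
        | exact vne_inf k _ hk
        | exact Ne.symm (vne_inf k _ hk)
        | (exfalso; omega)
        | (apply vne k _ _ hk <;> omega)
  · rw [form_B k m p hplt hz1.1 hz1.2]
    rw [form_D k m' p' hk hplt' hz2.1]
    apply disj_of_vals <;>
      first
        | exact vne_inf k _ hk
        | exact Ne.symm (vne_inf k _ hk)
        | (exfalso; omega)
        | (apply vne k _ _ hk <;> omega)
  · rw [form_C k m p hk hplt hz1]
    rw [form_A k m' p' hplt' hz2]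
    apply disj_of_vals <;>
      first
        | exact vne_inf k _ hk
        | exact Ne.symm (vne_inf k _ hk)
        | (exfalso; omega)
        | (apply vne k _ _ hk <;> omega)
  · rw [form_C k m p hk hplt hz1]
    rw [form_B k m' p' hplt' hz2.1 hz2.2]
    apply disj_of_vals <;>
      first
        | exact vne_inf k _ hk
        | exact Ne.symm (vne_inf k _ hk)
        | (exfalso; omega)
        | (apply vne k _ _ hk <;> omega)
  · rw [form_C k m p hk hplt hz1]
    rw [form_C k m' p' hk hplt' hz2]
    apply disj_of_vals <;>
      first
        | exact vne_inf k _ hk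
        | exact Ne.symm (vne_inf k _ hk)
        | (exfalso; omega)
        | (apply vne k _ _ hk <;> omega)
  · rw [form_C k m p hk hplt hz1]
    rw [form_D k m' p' hk hplt' hz2.1]
    apply disj_of_vals <;>
      first
        | exact vne_inf k _ hk
        | exact Ne.symm (vne_inf k _ hk)
        | (exfalso; omega)
        | (apply vne k _ _ hk <;> omega)
  · rw [form_D k m p hk hplt hz1.1]
    rw [form_A k m' p' hplt' hz2]
    apply disj_of_vals <;>
      first
        | exact vne_inf k _ hk
        | exact Ne.symm (vne_inf k _ hk)
        | (exfalso; omega)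
        | (apply vne k _ _ hk <;> omega)
  · rw [form_D k m p hk hplt hz1.1]
    rw [form_B k m' p' hplt' hz2.1 hz2.2]
    apply disj_of_vals <;>
      first
        | exact vne_inf k _ hk
        | exact Ne.symm (vne_inf k _ hk)
        | (exfalso; omega)
        | (apply vne k _ _ hk <;> omega)
  · rw [form_D k m p hk hplt hz1.1]
    rw [form_C k m' p' hk hplt' hz2]
    apply disj_of_vals <;>
      first
        | exact vne_inf k _ hk
        | exact Ne.symm (vne_inf k _ hk)
        | (exfalso; omega)
        | (apply vne k _ _ hk <;> omega)
  · rw [form_D k m p hk hplt hz1.1]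
    rw [form_D k m' p' hk hplt' hz2.1]
    apply disj_of_vals <;>
      first
        | exact vne_inf k _ hk
        | exact Ne.symm (vne_inf k _ hk)
        | (exfalso; omega)
        | (apply vne k _ _ hk <;> omega)

lemma odd_inj (k : ℕ) (hk : 1 ≤ k) (t : ℕ) (ht : t < (2*k+1)*k) (s : ℕ)
    (hs : s < (2*k+1)*k) (he : oddEdge k t = oddEdge k s) : t = s := by
  obtain ⟨m, p, hplt, rfl⟩ : ∃ m p, p < 2*k+1 ∧ t = (2*k+1)*m + p :=
    ⟨t/(2*k+1), t%(2*k+1), Nat.mod_lt _ (by omega), (Nat.div_add_mod t (2*k+1)).symm⟩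
  obtain ⟨m', p', hplt', rfl⟩ : ∃ m' p', p' < 2*k+1 ∧ s = (2*k+1)*m' + p' :=
    ⟨s/(2*k+1), s%(2*k+1), Nat.mod_lt _ (by omega), (Nat.div_add_mod s (2*k+1)).symm⟩
  have hmk : m < k := by
    by_contra hc
    push_neg at hc
    have := Nat.mul_le_mul_left (2*k+1) hc
    omega
  have hmk' : m' < k := by
    by_contra hc
    push_neg at hc
    have := Nat.mul_le_mul_left (2*k+1) hc
    omega
  clear ht hs
  suffices h : m = m' ∧ p = p' by rw [h.1, h.2]
  rcases (show p = 0 ∨ (0 < p ∧ p < k) ∨ p = k ∨ (k < p ∧ p < 2*k+1) from by omega) with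
    hz1 | hz1 | hz1 | hz1 <;>
  rcases (show p' = 0 ∨ (0 < p' ∧ p' < k) ∨ p' = k ∨ (k < p' ∧ p' < 2*k+1) from by omega) with
    hz2 | hz2 | hz2 | hz2
  · rw [form_A k m p hplt hz1] at he
    rw [form_A k m' p' hplt' hz2] at he
    have : (m) % (2*k) = m := Nat.mod_eq_of_lt (by omega)
    have : (m') % (2*k) = m' := Nat.mod_eq_of_lt (by omega)
    simp only [Sym2.eq_iff, Fin.ext_iff, oddVert_val k hk, oddInf_val] at he
    omega
  · rw [form_A k m p hplt hz1] at he
    rw [form_B k m' p' hplt' hz2.1 hz2.2] at he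
    have : (m) % (2*k) = m := Nat.mod_eq_of_lt (by omega)
    have := modc' (m'+p') (2*k) (by omega) (by omega)
    have := modc' (m'+2*k-p') (2*k) (by omega) (by omega)
    simp only [Sym2.eq_iff, Fin.ext_iff, oddVert_val k hk, oddInf_val] at he
    omega
  · rw [form_A k m p hplt hz1] at he
    rw [form_C k m' p' hk hplt' hz2] at he
    have : (m) % (2*k) = m := Nat.mod_eq_of_lt (by omega)
    have : (m'+k) % (2*k) = m'+k := Nat.mod_eq_of_lt (by omega)
    simp only [Sym2.eq_iff, Fin.ext_iff, oddVert_val k hk, oddInf_val] at he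
    omega
  · rw [form_A k m p hplt hz1] at he
    rw [form_D k m' p' hk hplt' hz2.1] at he
    have : (m) % (2*k) = m := Nat.mod_eq_of_lt (by omega)
    have : (m'+p'-k) % (2*k) = m'+p'-k := Nat.mod_eq_of_lt (by omega)
    have := modc' (m'+2*k-(p'-(k+1))) (2*k) (by omega) (by omega)
    simp only [Sym2.eq_iff, Fin.ext_iff, oddVert_val k hk, oddInf_val] at he
    omega
  · rw [form_B k m p hplt hz1.1 hz1.2] at he
    rw [form_A k m' p' hplt' hz2] at he
    have := modc' (m+p) (2*k) (by omega) (by omega)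
    have := modc' (m+2*k-p) (2*k) (by omega) (by omega)
    have : (m') % (2*k) = m' := Nat.mod_eq_of_lt (by omega)
    simp only [Sym2.eq_iff, Fin.ext_iff, oddVert_val k hk, oddInf_val] at he
    omega
  · rw [form_B k m p hplt hz1.1 hz1.2] at he
    rw [form_B k m' p' hplt' hz2.1 hz2.2] at he
    have := modc' (m+p) (2*k) (by omega) (by omega)
    have := modc' (m+2*k-p) (2*k) (by omega) (by omega)
    have := modc' (m'+p') (2*k) (by omega) (by omega)
    have := modc' (m'+2*k-p') (2*k) (by omega) (by omega)
    simp only [Sym2.eq_iff, Fin.ext_iff, oddVert_val k hk, oddInf_val] at he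
    omega
  · rw [form_B k m p hplt hz1.1 hz1.2] at he
    rw [form_C k m' p' hk hplt' hz2] at he
    have := modc' (m+p) (2*k) (by omega) (by omega)
    have := modc' (m+2*k-p) (2*k) (by omega) (by omega)
    have : (m'+k) % (2*k) = m'+k := Nat.mod_eq_of_lt (by omega)
    simp only [Sym2.eq_iff, Fin.ext_iff, oddVert_val k hk, oddInf_val] at he
    omega
  · rw [form_B k m p hplt hz1.1 hz1.2] at he
    rw [form_D k m' p' hk hplt' hz2.1] at he
    have := modc' (m+p) (2*k) (by omega) (by omega)
    have := modc' (m+2*k-p) (2*k) (by omega) (by omega)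
    have : (m'+p'-k) % (2*k) = m'+p'-k := Nat.mod_eq_of_lt (by omega)
    have := modc' (m'+2*k-(p'-(k+1))) (2*k) (by omega) (by omega)
    simp only [Sym2.eq_iff, Fin.ext_iff, oddVert_val k hk, oddInf_val] at he
    omega
  · rw [form_C k m p hk hplt hz1] at he
    rw [form_A k m' p' hplt' hz2] at he
    have : (m+k) % (2*k) = m+k := Nat.mod_eq_of_lt (by omega)
    have : (m') % (2*k) = m' := Nat.mod_eq_of_lt (by omega)
    simp only [Sym2.eq_iff, Fin.ext_iff, oddVert_val k hk, oddInf_val] at he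
    omega
  · rw [form_C k m p hk hplt hz1] at he
    rw [form_B k m' p' hplt' hz2.1 hz2.2] at he
    have : (m+k) % (2*k) = m+k := Nat.mod_eq_of_lt (by omega)
    have := modc' (m'+p') (2*k) (by omega) (by omega)
    have := modc' (m'+2*k-p') (2*k) (by omega) (by omega)
    simp only [Sym2.eq_iff, Fin.ext_iff, oddVert_val k hk, oddInf_val] at he
    omega
  · rw [form_C k m p hk hplt hz1] at he
    rw [form_C k m' p' hk hplt' hz2] at he
    have : (m+k) % (2*k) = m+k := Nat.mod_eq_of_lt (by omega)
    have : (m'+k) % (2*k) = m'+k := Nat.mod_eq_of_lt (by omega)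
    simp only [Sym2.eq_iff, Fin.ext_iff, oddVert_val k hk, oddInf_val] at he
    omega
  · rw [form_C k m p hk hplt hz1] at he
    rw [form_D k m' p' hk hplt' hz2.1] at he
    have : (m+k) % (2*k) = m+k := Nat.mod_eq_of_lt (by omega)
    have : (m'+p'-k) % (2*k) = m'+p'-k := Nat.mod_eq_of_lt (by omega)
    have := modc' (m'+2*k-(p'-(k+1))) (2*k) (by omega) (by omega)
    simp only [Sym2.eq_iff, Fin.ext_iff, oddVert_val k hk, oddInf_val] at he
    omega
  · rw [form_D k m p hk hplt hz1.1] at he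
    rw [form_A k m' p' hplt' hz2] at he
    have : (m+p-k) % (2*k) = m+p-k := Nat.mod_eq_of_lt (by omega)
    have := modc' (m+2*k-(p-(k+1))) (2*k) (by omega) (by omega)
    have : (m') % (2*k) = m' := Nat.mod_eq_of_lt (by omega)
    simp only [Sym2.eq_iff, Fin.ext_iff, oddVert_val k hk, oddInf_val] at he
    omega
  · rw [form_D k m p hk hplt hz1.1] at he
    rw [form_B k m' p' hplt' hz2.1 hz2.2] at he
    have : (m+p-k) % (2*k) = m+p-k := Nat.mod_eq_of_lt (by omega)
    have := modc' (m+2*k-(p-(k+1))) (2*k) (by omega) (by omega)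
    have := modc' (m'+p') (2*k) (by omega) (by omega)
    have := modc' (m'+2*k-p') (2*k) (by omega) (by omega)
    simp only [Sym2.eq_iff, Fin.ext_iff, oddVert_val k hk, oddInf_val] at he
    omega
  · rw [form_D k m p hk hplt hz1.1] at he
    rw [form_C k m' p' hk hplt' hz2] at he
    have : (m+p-k) % (2*k) = m+p-k := Nat.mod_eq_of_lt (by omega)
    have := modc' (m+2*k-(p-(k+1))) (2*k) (by omega) (by omega)
    have : (m'+k) % (2*k) = m'+k := Nat.mod_eq_of_lt (by omega)
    simp only [Sym2.eq_iff, Fin.ext_iff, oddVert_val k hk, oddInf_val] at he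
    omega
  · rw [form_D k m p hk hplt hz1.1] at he
    rw [form_D k m' p' hk hplt' hz2.1] at he
    have : (m+p-k) % (2*k) = m+p-k := Nat.mod_eq_of_lt (by omega)
    have := modc' (m+2*k-(p-(k+1))) (2*k) (by omega) (by omega)
    have : (m'+p'-k) % (2*k) = m'+p'-k := Nat.mod_eq_of_lt (by omega)
    have := modc' (m'+2*k-(p'-(k+1))) (2*k) (by omega) (by omega)
    simp only [Sym2.eq_iff, Fin.ext_iff, oddVert_val k hk, oddInf_val] at he
    omega


def evenVert (k x : ℕ) : Fin (2*k+2) :=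
  ⟨x % (2*k+1) % (2*k+2), Nat.mod_lt _ (by omega)⟩

def evenInf (k : ℕ) : Fin (2*k+2) := ⟨2*k+1, by omega⟩

lemma evenVert_val (k x : ℕ) : (evenVert k x).val = x % (2*k+1) := by
  simp only [evenVert]
  exact Nat.mod_eq_of_lt (lt_trans (Nat.mod_lt _ (by omega)) (by omega))

lemma evenInf_val (k : ℕ) : (evenInf k).val = 2*k+1 := rfl

def evenEdge (k t : ℕ) : Sym2 (Fin (2*k+2)) :=
  if t % (k+1) = 0 then s(evenInf k, evenVert k (t / (k+1)))
  else s(evenVert k (t / (k+1) + t % (k+1)), evenVert k (t / (k+1) + (2*k+1) - t % (k+1)))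

lemma evne (k x y : ℕ) (hx : x < 2*(2*k+1)) (hy : y < 2*(2*k+1))
    (h1 : x ≠ y) (h2 : x + (2*k+1) ≠ y) (h3 : y + (2*k+1) ≠ x) :
    evenVert k x ≠ evenVert k y := by
  intro h
  rw [Fin.ext_iff, evenVert_val, evenVert_val] at h
  have a1 := modc' x (2*k+1) (by omega) (by omega)
  have a2 := modc' y (2*k+1) (by omega) (by omega)
  omega

lemma evne_inf (k x : ℕ) : evenVert k x ≠ evenInf k := by
  intro h
  rw [Fin.ext_iff, evenVert_val, evenInf_val] at h
  have := Nat.mod_lt x (show 0 < 2*k+1 by omega)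
  omega

lemma even_divmod (k i j : ℕ) (hj : j < k+1) :
    ((k+1)*i+j)/(k+1) = i ∧ ((k+1)*i+j)%(k+1) = j := by
  constructor
  · rw [Nat.mul_add_div (by omega), Nat.div_eq_of_lt hj]
    omega
  · rw [Nat.mul_add_mod, Nat.mod_eq_of_lt hj]

lemma form_O (k i j : ℕ) (hj : j < k+1) (h : j = 0) :
    evenEdge k ((k+1)*i+j) = s(evenInf k, evenVert k i) := by
  obtain ⟨hd, hm⟩ := even_divmod k i j hj
  rw [evenEdge, hm, hd, if_pos h]

lemma form_P (k i j : ℕ) (hj : j < k+1) (h0 : 0 < j) :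
    evenEdge k ((k+1)*i+j) = s(evenVert k (i+j), evenVert k (i+(2*k+1)-j)) := by
  obtain ⟨hd, hm⟩ := even_divmod k i j hj
  rw [evenEdge, hm, hd, if_neg (by omega)]

lemma even_mem (k : ℕ) (hk : 1 ≤ k) (t : ℕ) (ht : t < (2*k+1)*(k+1)) :
    evenEdge k t ∈ (⊤ : SimpleGraph (Fin (2*k+2))).edgeSet := by
  obtain ⟨i, j, hjlt, rfl⟩ : ∃ i j, j < k+1 ∧ t = (k+1)*i + j :=
    ⟨t/(k+1), t%(k+1), Nat.mod_lt _ (by omega), (Nat.div_add_mod t (k+1)).symm⟩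
  have hik : i < 2*k+1 := by
    by_contra hc
    push_neg at hc
    have h4 := Nat.mul_le_mul_left (k+1) hc
    have h5 : (k+1)*(2*k+1) = (2*k+1)*(k+1) := by ring
    omega
  clear ht
  rcases (show j = 0 ∨ (0 < j ∧ j < k+1) from by omega) with hz1 | hz1
  · rw [form_O k i j hjlt hz1]
    rw [SimpleGraph.mem_edgeSet, SimpleGraph.top_adj]
    have : (i) % (2*k+1) = i := Nat.mod_eq_of_lt (by omega)
    simp only [Ne, Fin.ext_iff, evenVert_val, evenInf_val]
    omega
  · rw [form_P k i j hjlt hz1.1]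
    rw [SimpleGraph.mem_edgeSet, SimpleGraph.top_adj]
    have := modc' (i+j) (2*k+1) (by omega) (by omega)
    have := modc' (i+(2*k+1)-j) (2*k+1) (by omega) (by omega)
    simp only [Ne, Fin.ext_iff, evenVert_val, evenInf_val]
    omega

lemma even_disj (k : ℕ) (hk : 1 ≤ k) (t s : ℕ) (hts : t < s) (hs : s < (2*k+1)*(k+1))
    (hwin : s < t + k) : edgesDisjoint (evenEdge k t) (evenEdge k s) := by
  obtain ⟨i, j, hjlt, rfl⟩ : ∃ i j, j < k+1 ∧ t = (k+1)*i + j :=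
    ⟨t/(k+1), t%(k+1), Nat.mod_lt _ (by omega), (Nat.div_add_mod t (k+1)).symm⟩
  obtain ⟨i', j', hjlt', rfl⟩ : ∃ i' j', j' < k+1 ∧ s = (k+1)*i' + j' :=
    ⟨s/(k+1), s%(k+1), Nat.mod_lt _ (by omega), (Nat.div_add_mod s (k+1)).symm⟩
  have hik' : i' < 2*k+1 := by
    by_contra hc
    push_neg at hc
    have h4 := Nat.mul_le_mul_left (k+1) hc
    have h5 : (k+1)*(2*k+1) = (2*k+1)*(k+1) := by ring
    omega
  have hrel := odd_block_rel (k+1) i j i' j' k hjlt hjlt' hts (by omega) (by omega)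
  have hik : i < 2*k+1 := by omega
  clear hts hs hwin
  rcases (show j = 0 ∨ (0 < j ∧ j < k+1) from by omega) with hz1 | hz1 <;>
  rcases (show j' = 0 ∨ (0 < j' ∧ j' < k+1) from by omega) with hz2 | hz2
  · rw [form_O k i j hjlt hz1]
    rw [form_O k i' j' hjlt' hz2]
    apply disj_of_vals <;>
      first
        | exact evne_inf k _
        | exact Ne.symm (evne_inf k _)
        | (exfalso; omega)
        | (apply evne k <;> omega)
  · rw [form_O k i j hjlt hz1]
    rw [form_P k i' j' hjlt' hz2.1]
    apply disj_of_vals <;>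
      first
        | exact evne_inf k _
        | exact Ne.symm (evne_inf k _)
        | (exfalso; omega)
        | (apply evne k <;> omega)
  · rw [form_P k i j hjlt hz1.1]
    rw [form_O k i' j' hjlt' hz2]
    apply disj_of_vals <;>
      first
        | exact evne_inf k _
        | exact Ne.symm (evne_inf k _)
        | (exfalso; omega)
        | (apply evne k <;> omega)
  · rw [form_P k i j hjlt hz1.1]
    rw [form_P k i' j' hjlt' hz2.1]
    apply disj_of_vals <;>
      first
        | exact evne_inf k _
        | exact Ne.symm (evne_inf k _)
        | (exfalso; omega)
        | (apply evne k <;> omega)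

lemma even_inj (k : ℕ) (hk : 1 ≤ k) (t : ℕ) (ht : t < (2*k+1)*(k+1)) (s : ℕ)
    (hs : s < (2*k+1)*(k+1)) (he : evenEdge k t = evenEdge k s) : t = s := by
  obtain ⟨i, j, hjlt, rfl⟩ : ∃ i j, j < k+1 ∧ t = (k+1)*i + j :=
    ⟨t/(k+1), t%(k+1), Nat.mod_lt _ (by omega), (Nat.div_add_mod t (k+1)).symm⟩
  obtain ⟨i', j', hjlt', rfl⟩ : ∃ i' j', j' < k+1 ∧ s = (k+1)*i' + j' :=
    ⟨s/(k+1), s%(k+1), Nat.mod_lt _ (by omega), (Nat.div_add_mod s (k+1)).symm⟩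
  have hik : i < 2*k+1 := by
    by_contra hc
    push_neg at hc
    have h4 := Nat.mul_le_mul_left (k+1) hc
    have h5 : (k+1)*(2*k+1) = (2*k+1)*(k+1) := by ring
    omega
  have hik' : i' < 2*k+1 := by
    by_contra hc
    push_neg at hc
    have h4 := Nat.mul_le_mul_left (k+1) hc
    have h5 : (k+1)*(2*k+1) = (2*k+1)*(k+1) := by ring
    omega
  clear ht hs
  suffices h : i = i' ∧ j = j' by rw [h.1, h.2]
  rcases (show j = 0 ∨ (0 < j ∧ j < k+1) from by omega) with hz1 | hz1 <;>
  rcases (show j' = 0 ∨ (0 < j' ∧ j' < k+1) from by omega) with hz2 | hz2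
  · rw [form_O k i j hjlt hz1] at he
    rw [form_O k i' j' hjlt' hz2] at he
    have : (i) % (2*k+1) = i := Nat.mod_eq_of_lt (by omega)
    have : (i') % (2*k+1) = i' := Nat.mod_eq_of_lt (by omega)
    simp only [Sym2.eq_iff, Fin.ext_iff, evenVert_val, evenInf_val] at he
    omega
  · rw [form_O k i j hjlt hz1] at he
    rw [form_P k i' j' hjlt' hz2.1] at he
    have : (i) % (2*k+1) = i := Nat.mod_eq_of_lt (by omega)
    have := modc' (i'+j') (2*k+1) (by omega) (by omega)
    have := modc' (i'+(2*k+1)-j') (2*k+1) (by omega) (by omega)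
    simp only [Sym2.eq_iff, Fin.ext_iff, evenVert_val, evenInf_val] at he
    omega
  · rw [form_P k i j hjlt hz1.1] at he
    rw [form_O k i' j' hjlt' hz2] at he
    have := modc' (i+j) (2*k+1) (by omega) (by omega)
    have := modc' (i+(2*k+1)-j) (2*k+1) (by omega) (by omega)
    have : (i') % (2*k+1) = i' := Nat.mod_eq_of_lt (by omega)
    simp only [Sym2.eq_iff, Fin.ext_iff, evenVert_val, evenInf_val] at he
    omega
  · rw [form_P k i j hjlt hz1.1] at he
    rw [form_P k i' j' hjlt' hz2.1] at he
    have := modc' (i+j) (2*k+1) (by omega) (by omega)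
    have := modc' (i+(2*k+1)-j) (2*k+1) (by omega) (by omega)
    have := modc' (i'+j') (2*k+1) (by omega) (by omega)
    have := modc' (i'+(2*k+1)-j') (2*k+1) (by omega) (by omega)
    simp only [Sym2.eq_iff, Fin.ext_iff, evenVert_val, evenInf_val] at he
    omega


lemma odd_lower (k : ℕ) (hk : 1 ≤ k) : k ≤ ms (⊤ : SimpleGraph (Fin (2*k+1))) := by
  have hch : (2*k+1).choose 2 = (2*k+1)*k := by
    rw [Nat.choose_two_right]
    have h1 : 2*k+1-1 = 2*k := by omega
    rw [h1]
    have h2 : (2*k+1)*(2*k) = ((2*k+1)*k)*2 := by ring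
    omega
  have hbig : k ≤ (2*k+1)*k := by
    have := Nat.mul_le_mul_right k (show 1 ≤ 2*k+1 by omega)
    omega
  apply ms_ge_of_good (2*k+1) k (oddEdge k)
  · intro t ht; exact odd_mem k hk t (by omega)
  · intro t ht s hs; exact odd_inj k hk t (by omega) s (by omega)
  · intro t s h1 h2 h3; exact odd_disj k hk t s h1 (by omega) h3
  · omega

lemma even_lower (k : ℕ) (hk : 1 ≤ k) : k ≤ ms (⊤ : SimpleGraph (Fin (2*k+2))) := by
  have hch : (2*k+2).choose 2 = (2*k+1)*(k+1) := by
    rw [Nat.choose_two_right]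
    have h1 : 2*k+2-1 = 2*k+1 := by omega
    rw [h1]
    have h2 : (2*k+2)*(2*k+1) = ((2*k+1)*(k+1))*2 := by ring
    omega
  have hbig : k ≤ (2*k+1)*(k+1) := by
    have := Nat.mul_le_mul_right (k+1) (show 1 ≤ 2*k+1 by omega)
    omega
  apply ms_ge_of_good (2*k+2) k (evenEdge k)
  · intro t ht; exact even_mem k hk t (by omega)
  · intro t ht s hs; exact even_inj k hk t (by omega) s (by omega)
  · intro t s h1 h2 h3; exact even_disj k hk t s h1 (by omega) h3
  · omega

/-- For every integer `n ≥ 3`, `ms (K_n) = ⌊(n-1)/2⌋`. -/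
theorem ms_completeGraph (n : ℕ) (hn : 3 ≤ n) :
    ms (⊤ : SimpleGraph (Fin n)) = (n - 1) / 2 := by
  obtain ⟨k, hk1, hk2⟩ : ∃ k, 1 ≤ k ∧ (n = 2*k+1 ∨ n = 2*k+2) := ⟨(n-1)/2, by omega⟩
  refine le_antisymm (ms_le_main n hn) ?_
  rcases hk2 with rfl | rfl
  · have h1 : (2*k+1-1)/2 = k := by omega
    rw [h1]
    exact odd_lower k hk1
  · have h1 : (2*k+2-1)/2 = k := by omega
    rw [h1]
    exact even_lower k hk1
end

section
/- Let G be a finite simple graph on n vertices that is not itself a matching, i.e., G contains two distinct edges sharing a common vertex. Then the matching sequencibility of G satisfies ms(G) ≤ ⌊(n-1)/2⌋. -/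
/-- If a finite simple graph `G` on `n` vertices is not itself a matching
(it has two distinct edges sharing a vertex), then `ms G ≤ ⌊(n-1)/2⌋`. -/
theorem ms_le_of_not_matching {V : Type*} [Fintype V] (G : SimpleGraph V)
    (h : ∃ e₁ ∈ G.edgeSet, ∃ e₂ ∈ G.edgeSet, e₁ ≠ e₂ ∧ ∃ v : V, v ∈ e₁ ∧ v ∈ e₂) :
    ms G ≤ (Fintype.card V - 1) / 2 := by
  classical
  set n := Fintype.card V with hn
  set m := edgeCount G with hm
  apply csSup_le
  · refine ⟨0, Nat.zero_le _, (Finite.equivFin G.edgeSet).symm, ?_⟩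
    intro j k hjk h1 h2
    omega
  rintro d ⟨hdm, f, hf⟩
  by_contra hcon
  push_neg at hcon
  have hd1 : 1 ≤ d := by omega
  obtain ⟨e₁, he₁, e₂, he₂, hne12, v₀, hv1, hv2⟩ := h
  -- choose the two endpoints of each edge
  have hchoice : ∀ e : G.edgeSet, ∃ q : V × V, q.1 ≠ q.2 ∧ (e : Sym2 V) = s(q.1, q.2) := by
    rintro ⟨e, he⟩
    induction e using Sym2.ind with
    | _ a b => exact ⟨(a, b), (G.mem_edgeSet.mp he).ne, rfl⟩
  choose p hp hpe using hchoice
  have hmem1 : ∀ e : G.edgeSet, (p e).1 ∈ (e : Sym2 V) := fun e => by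
    rw [hpe e]; exact Sym2.mem_mk_left _ _
  have hmem2 : ∀ e : G.edgeSet, (p e).2 ∈ (e : Sym2 V) := fun e => by
    rw [hpe e]; exact Sym2.mem_mk_right _ _
  have hdm' : ∀ i : Fin d, (i : ℕ) < m := fun i => lt_of_lt_of_le i.2 hdm
  set ψ : Fin d × Bool → V :=
    fun x => if x.2 then (p (f ⟨x.1, hdm' x.1⟩)).1 else (p (f ⟨x.1, hdm' x.1⟩)).2 with hψ
  have hψmem : ∀ x : Fin d × Bool, ψ x ∈ (f ⟨x.1, hdm' x.1⟩ : Sym2 V) := by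
    rintro ⟨i, b⟩
    cases b
    · exact hmem2 _
    · exact hmem1 _
  have hinj : Function.Injective ψ := by
    rintro ⟨i, b⟩ ⟨j, c⟩ hxy
    by_cases hij : i = j
    · subst hij
      cases b <;> cases c
      · rfl
      · exact absurd hxy.symm (hp _)
      · exact absurd hxy (hp _)
      · rfl
    · exfalso
      have hne : (⟨(i : ℕ), hdm' i⟩ : Fin m) ≠ ⟨(j : ℕ), hdm' j⟩ := by
        intro hh
        exact hij (Fin.ext (by simpa [Fin.ext_iff] using hh))
      have hd := hf ⟨(i : ℕ), hdm' i⟩ ⟨(j : ℕ), hdm' j⟩ hne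
        (by show (i : ℕ) < (j : ℕ) + d; have := i.2; omega)
        (by show (j : ℕ) < (i : ℕ) + d; have := j.2; omega)
      exact hd _ (hψmem ⟨i, b⟩) (hxy ▸ hψmem ⟨j, c⟩)
  have hcard : d * 2 ≤ n := by
    have := Fintype.card_le_of_injective ψ hinj
    simpa using this
  have hn2 : n = 2 * d := by omega
  have hsurj : Function.Surjective ψ := by
    have hcards : Fintype.card (Fin d × Bool) = Fintype.card V := by
      simp; omega
    exact ((Fintype.bijective_iff_injective_and_card ψ).mpr ⟨hinj, hcards⟩).2
  -- d < m
  have hdltm : d < m := by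
    rcases lt_or_eq_of_le hdm with hlt | heq
    · exact hlt
    · exfalso
      set i := f.symm ⟨e₁, he₁⟩ with hi
      set j := f.symm ⟨e₂, he₂⟩ with hj
      have h1 : (f i : Sym2 V) = e₁ := by rw [hi, f.apply_symm_apply]
      have h2 : (f j : Sym2 V) = e₂ := by rw [hj, f.apply_symm_apply]
      have hij : i ≠ j := by intro hh; apply hne12; rw [← h1, ← h2, hh]
      have hd := hf i j hij (by have := i.2; have := j.2; omega)
        (by have := i.2; have := j.2; omega)
      exact hd v₀ (by rw [h1]; exact hv1) (by rw [h2]; exact hv2)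
  set i0 : Fin m := ⟨0, by omega⟩ with hi0def
  set idd : Fin m := ⟨d, hdltm⟩ with hidddef
  have hsub : ∀ v : V, v ∈ (f idd : Sym2 V) → v ∈ (f i0 : Sym2 V) := by
    intro v hv
    obtain ⟨⟨i, b⟩, rfl⟩ := hsurj v
    have hmem := hψmem ⟨i, b⟩
    by_cases hi0 : (i : ℕ) = 0
    · have heqi : (⟨(i : ℕ), hdm' i⟩ : Fin m) = i0 := by
        rw [hi0def]; exact Fin.ext hi0
      rwa [heqi] at hmem
    · exfalso
      have hne : (⟨(i : ℕ), hdm' i⟩ : Fin m) ≠ idd := by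
        intro hh
        have : (i : ℕ) = d := by simpa [hidddef, Fin.ext_iff] using hh
        have := i.2; omega
      have hd := hf ⟨(i : ℕ), hdm' i⟩ idd hne
        (by show (i : ℕ) < d + d; have := i.2; omega)
        (by show d < (i : ℕ) + d; omega)
      exact hd _ hmem hv
  have ha := hmem1 (f idd)
  have hb := hmem2 (f idd)
  have ha0 := hsub _ ha
  have hb0 := hsub _ hb
  have h0 := hpe (f i0)
  have hdd := hpe (f idd)
  have hne0 := hp (f i0)
  have hned := hp (f idd)
  rw [h0, Sym2.mem_iff] at ha0 hb0
  have heq : (f idd : Sym2 V) = (f i0 : Sym2 V) := by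
    rw [h0, hdd, Sym2.eq_iff]
    rcases ha0 with h1 | h1 <;> rcases hb0 with h2 | h2
    · exact absurd (h1.trans h2.symm) hned
    · exact Or.inl ⟨h1, h2⟩
    · exact Or.inr ⟨h1, h2⟩
    · exact absurd (h1.trans h2.symm) hned
  have hfin : idd = i0 := f.injective (Subtype.ext heq)
  have : d = 0 := by simpa [hidddef, hi0def, Fin.ext_iff] using hfin
  omega
end

section
/- For all integers m, n with 1 ≤ m < n, the matching sequencibility of the complete bipartite graph K_{m,n} equals m. -/
namespace MSaux

/-- The right-endpoint index of the `t`-th edge in our ordering. -/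
def rightIdx (m n t : ℕ) : ℕ := (t / m * (n - 1) + t % m) % n

private lemma int_helper {n : ℕ} {d : ℤ} (h : (n:ℤ) ∣ d) (h1 : -(n:ℤ) < d) (h2 : d < n)
    (h3 : d ≠ 0) : False := by
  have h4 : (n:ℤ) ≤ |d| := Int.le_of_dvd (abs_pos.mpr h3) ((dvd_abs _ _).mpr h)
  have h5 : |d| < n := abs_lt.mpr ⟨h1, h2⟩
  exact absurd h5 (not_lt.mpr h4)

lemma lefts_ne {m : ℕ} (hm : 0 < m) {s t : ℕ} (hst : s < t) (h : t < s + m) :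
    t % m ≠ s % m := by
  intro he
  have h1 : s / m ≤ t / m := Nat.div_le_div_right hst.le
  have h2 : t / m ≤ s / m + 1 := by
    calc t / m ≤ (s + m) / m := Nat.div_le_div_right (by omega)
    _ = s / m + 1 := Nat.add_div_right _ hm
  have e1 := Nat.div_add_mod s m
  have e2 := Nat.div_add_mod t m
  rcases (by omega : t / m = s / m ∨ t / m = s / m + 1) with hq | hq <;> rw [hq] at e2
  · omega
  · have hx : m * (s / m + 1) = m * (s / m) + m := by ring
    omega

lemma rights_ne {m n : ℕ} (hm : 0 < m) (hmn : m < n) {s t : ℕ} (hst : s < t)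
    (h : t < s + m) : rightIdx m n t ≠ rightIdx m n s := by
  intro he
  have hrm1 : t % m < m := Nat.mod_lt _ hm
  have hrm2 : s % m < m := Nat.mod_lt _ hm
  have hmod : (t / m * (n - 1) + t % m) ≡ (s / m * (n - 1) + s % m) [MOD n] := he
  have hdvd := Nat.modEq_iff_dvd.mp hmod
  have h1 : s / m ≤ t / m := Nat.div_le_div_right hst.le
  have h2 : t / m ≤ s / m + 1 := by
    calc t / m ≤ (s + m) / m := Nat.div_le_div_right (by omega)
    _ = s / m + 1 := Nat.add_div_right _ hm
  have e1 := Nat.div_add_mod s m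
  have e2 := Nat.div_add_mod t m
  rcases (by omega : t / m = s / m ∨ t / m = s / m + 1) with hq | hq <;> rw [hq] at hdvd e2
  · -- same block: right endpoints differ since residues differ
    have hne : t % m ≠ s % m := by omega
    have hd : ((s / m * (n - 1) + s % m : ℕ) : ℤ) - ((s / m * (n - 1) + t % m : ℕ) : ℤ)
        = (s % m : ℤ) - (t % m : ℤ) := by push_cast; ring
    rw [hd] at hdvd
    exact int_helper hdvd (by omega) (by omega) (by omega)
  · -- crossing blocks
    have hx : (s / m + 1) * (n - 1) = s / m * (n - 1) + (n - 1) := by ring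
    have hx2 : m * (s / m + 1) = m * (s / m) + m := by ring
    have hr : t % m < s % m := by omega
    have hd : ((s / m * (n - 1) + s % m : ℕ) : ℤ) - (((s / m + 1) * (n - 1) + t % m : ℕ) : ℤ)
        = (s % m : ℤ) - (t % m : ℤ) - ((n : ℤ) - 1) := by omega
    rw [hd] at hdvd
    exact int_helper hdvd (by omega) (by omega) (by omega)

private lemma cancel_q {n q1 q2 r : ℕ} (hn : 0 < n) (h1 : q1 < n) (h2 : q2 < n)
    (hmod : q2 * (n - 1) + r ≡ q1 * (n - 1) + r [MOD n]) : q2 = q1 := by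
  have hdvd := Nat.modEq_iff_dvd.mp hmod
  have hn1 : (1:ℕ) ≤ n := hn
  have hd : ((q1 * (n - 1) + r : ℕ) : ℤ) - ((q2 * (n - 1) + r : ℕ) : ℤ)
      = ((q1 : ℤ) - (q2 : ℤ)) * (n : ℤ) - ((q1 : ℤ) - (q2 : ℤ)) := by
    push_cast [Nat.cast_sub hn1]; ring
  rw [hd] at hdvd
  have hq : (n:ℤ) ∣ ((q1 : ℤ) - (q2 : ℤ)) := by
    have hx : (n:ℤ) ∣ ((q1 : ℤ) - (q2 : ℤ)) * n := dvd_mul_left _ _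
    have h2' := dvd_sub hx hdvd
    rwa [sub_sub_cancel] at h2'
  by_contra hne
  exact int_helper hq (by omega) (by omega) (by omega)

lemma g_inj {m n : ℕ} (hm : 0 < m) (hmn : m < n) {s t : ℕ} (hs : s < m * n) (ht : t < m * n)
    (hl : t % m = s % m) (hr : rightIdx m n t = rightIdx m n s) : t = s := by
  have hmod : (t / m * (n - 1) + t % m) ≡ (s / m * (n - 1) + s % m) [MOD n] := hr
  rw [hl] at hmod
  have hq1 : s / m < n := (Nat.div_lt_iff_lt_mul hm).mpr (by rw [mul_comm n m]; exact hs)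
  have hq2 : t / m < n := (Nat.div_lt_iff_lt_mul hm).mpr (by rw [mul_comm n m]; exact ht)
  have hqq := cancel_q (show 0 < n by omega) hq1 hq2 hmod
  have e1 := Nat.div_add_mod s m
  have e2 := Nat.div_add_mod t m
  rw [hqq] at e2
  omega



section Graph

open Sum

/-- The edge of `K_{m,n}` corresponding to a pair of endpoints. -/
def eFun (m n : ℕ) (p : Fin m × Fin n) : (completeBipartiteGraph (Fin m) (Fin n)).edgeSet :=
  ⟨s(Sum.inl p.1, Sum.inr p.2), by simp⟩

lemma eFun_inj (m n : ℕ) : Function.Injective (eFun m n) := by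
  rintro ⟨a, b⟩ ⟨a', b'⟩ h
  have h' : s(Sum.inl a, Sum.inr b) = (s(Sum.inl a', Sum.inr b') : Sym2 (Fin m ⊕ Fin n)) :=
    congrArg Subtype.val h
  rw [Sym2.eq_iff] at h'
  rcases h' with ⟨h1, h2⟩ | ⟨h1, h2⟩ <;> simp_all

lemma eFun_surj (m n : ℕ) : Function.Surjective (eFun m n) := by
  rintro ⟨e, he⟩
  induction e using Sym2.ind with
  | _ x y =>
    rw [SimpleGraph.mem_edgeSet] at he
    rcases x with a | b <;> rcases y with a' | b'
    · simp at he
    · exact ⟨(a, b'), rfl⟩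
    · exact ⟨(a', b), Subtype.ext Sym2.eq_swap⟩
    · simp at he

/-- The pairs-to-edges bijection. -/
noncomputable def eEquiv (m n : ℕ) :
    Fin m × Fin n ≃ (completeBipartiteGraph (Fin m) (Fin n)).edgeSet :=
  Equiv.ofBijective _ ⟨eFun_inj m n, eFun_surj m n⟩

lemma eEquiv_coe (m n : ℕ) (p : Fin m × Fin n) :
    ((eEquiv m n p : (completeBipartiteGraph (Fin m) (Fin n)).edgeSet) : Sym2 (Fin m ⊕ Fin n))
      = s(Sum.inl p.1, Sum.inr p.2) := rfl

lemma count_eq (m n : ℕ) : edgeCount (completeBipartiteGraph (Fin m) (Fin n)) = m * n := by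
  unfold edgeCount
  rw [Nat.card_congr (eEquiv m n).symm]
  simp

lemma eEquiv_disj (m n : ℕ) (p q : Fin m × Fin n) (h1 : p.1 ≠ q.1) (h2 : p.2 ≠ q.2) :
    edgesDisjoint ((eEquiv m n p : (completeBipartiteGraph (Fin m) (Fin n)).edgeSet) : Sym2 (Fin m ⊕ Fin n))
      ((eEquiv m n q : (completeBipartiteGraph (Fin m) (Fin n)).edgeSet) : Sym2 (Fin m ⊕ Fin n)) := by
  rw [eEquiv_coe, eEquiv_coe]
  intro v hv hv'
  rw [Sym2.mem_iff] at hv hv'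
  rcases hv with rfl | rfl <;> rcases hv' with h | h <;> simp_all

/-- The window function `Fin (m*n) → Fin m × Fin n`. -/
def gFun (m n : ℕ) (hm : 0 < m) (hn : 0 < n) (t : Fin (m * n)) : Fin m × Fin n :=
  (⟨(t : ℕ) % m, Nat.mod_lt _ hm⟩, ⟨rightIdx m n (t : ℕ), Nat.mod_lt _ hn⟩)

lemma gFun_bij (m n : ℕ) (hm : 0 < m) (hn : 0 < n) (hmn : m < n) :
    Function.Bijective (gFun m n hm hn) := by
  rw [Fintype.bijective_iff_injective_and_card]
  refine ⟨?_, by simp⟩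
  intro t s h
  rw [gFun, gFun, Prod.mk.injEq] at h
  obtain ⟨h1, h2⟩ := h
  exact Fin.ext (g_inj hm hmn s.isLt t.isLt (congrArg Fin.val h1) (congrArg Fin.val h2))

noncomputable def gEquiv (m n : ℕ) (hm : 0 < m) (hn : 0 < n) (hmn : m < n) :
    Fin (m * n) ≃ Fin m × Fin n :=
  Equiv.ofBijective _ (gFun_bij m n hm hn hmn)

/-- The good linear ordering of the edges of `K_{m,n}`. -/
noncomputable def theF (m n : ℕ) (hm : 0 < m) (hn : 0 < n) (hmn : m < n) :
    Fin (edgeCount (completeBipartiteGraph (Fin m) (Fin n)))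
      ≃ (completeBipartiteGraph (Fin m) (Fin n)).edgeSet :=
  (finCongr (count_eq m n)).trans ((gEquiv m n hm hn hmn).trans (eEquiv m n))

lemma theF_good (m n : ℕ) (hm : 0 < m) (hn : 0 < n) (hmn : m < n) :
    LinearGood (completeBipartiteGraph (Fin m) (Fin n)) (theF m n hm hn hmn) m := by
  intro j k hjk h1 h2
  have hvne : (j : ℕ) ≠ (k : ℕ) := fun hv => hjk (Fin.ext hv)
  have hfj : theF m n hm hn hmn j = eEquiv m n (gFun m n hm hn (finCongr (count_eq m n) j)) := rfl
  have hfk : theF m n hm hn hmn k = eEquiv m n (gFun m n hm hn (finCongr (count_eq m n) k)) := rfl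
  rw [hfj, hfk]
  rcases lt_or_gt_of_ne hvne with hlt | hlt
  · refine eEquiv_disj m n _ _ ?_ ?_
    · exact fun hc => (lefts_ne hm hlt h2) (congrArg Fin.val hc).symm
    · exact fun hc => (rights_ne hm hmn hlt h2) (congrArg Fin.val hc).symm
  · refine eEquiv_disj m n _ _ ?_ ?_
    · exact fun hc => (lefts_ne hm hlt h1) (congrArg Fin.val hc)
    · exact fun hc => (rights_ne hm hmn hlt h1) (congrArg Fin.val hc)

lemma upper_bound (m n : ℕ) (hm : 0 < m) (hmn : m < n) {d : ℕ}
    (hd : d ≤ edgeCount (completeBipartiteGraph (Fin m) (Fin n)))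
    (f' : Fin (edgeCount (completeBipartiteGraph (Fin m) (Fin n)))
      ≃ (completeBipartiteGraph (Fin m) (Fin n)).edgeSet)
    (hf' : LinearGood (completeBipartiteGraph (Fin m) (Fin n)) f' d) : d ≤ m := by
  by_contra hdm
  push_neg at hdm
  have hm1 : m + 1 ≤ edgeCount (completeBipartiteGraph (Fin m) (Fin n)) := le_trans hdm hd
  let h : Fin (m + 1) → Fin m := fun i =>
    ((eEquiv m n).symm (f' ⟨i.val, lt_of_lt_of_le i.isLt hm1⟩)).1
  obtain ⟨i, j, hij, hh⟩ := Fintype.exists_ne_map_eq_of_card_lt h (by simp)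
  set i' : Fin (edgeCount (completeBipartiteGraph (Fin m) (Fin n))) :=
    ⟨i.val, lt_of_lt_of_le i.isLt hm1⟩ with hi'
  set j' : Fin (edgeCount (completeBipartiteGraph (Fin m) (Fin n))) :=
    ⟨j.val, lt_of_lt_of_le j.isLt hm1⟩ with hj'
  have hne : i' ≠ j' := by
    intro hc
    apply hij
    have hcv := congrArg Fin.val hc
    exact Fin.ext hcv
  have hdisj := hf' i' j' hne
    (show (i : ℕ) < (j : ℕ) + d by omega) (show (j : ℕ) < (i : ℕ) + d by omega)
  set p := (eEquiv m n).symm (f' i') with hp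
  set q := (eEquiv m n).symm (f' j') with hq
  have hfp : f' i' = eEquiv m n p := (Equiv.apply_symm_apply _ _).symm
  have hfq : f' j' = eEquiv m n q := (Equiv.apply_symm_apply _ _).symm
  have hpq : p.1 = q.1 := hh
  have hmem1 : Sum.inl p.1 ∈ (f' i' : Sym2 (Fin m ⊕ Fin n)) := by
    rw [hfp, eEquiv_coe]
    exact Sym2.mem_iff.mpr (Or.inl rfl)
  have hmem2 : Sum.inl p.1 ∈ (f' j' : Sym2 (Fin m ⊕ Fin n)) := by
    rw [hfq, eEquiv_coe]
    exact Sym2.mem_iff.mpr (Or.inl (congrArg Sum.inl hpq))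
  exact hdisj _ hmem1 hmem2

end Graph

end MSaux

/-- For all integers `1 ≤ m < n`, `ms (K_{m,n}) = m`. -/
theorem ms_completeBipartiteGraph_lt (m n : ℕ) (hm : 1 ≤ m) (hmn : m < n) :
    ms (completeBipartiteGraph (Fin m) (Fin n)) = m := by
  have hm0 : 0 < m := hm
  have hn0 : 0 < n := by omega
  have hmemS : m ∈ {d : ℕ | d ≤ edgeCount (completeBipartiteGraph (Fin m) (Fin n)) ∧
      ∃ f : Fin (edgeCount (completeBipartiteGraph (Fin m) (Fin n)))
        ≃ (completeBipartiteGraph (Fin m) (Fin n)).edgeSet,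
        LinearGood (completeBipartiteGraph (Fin m) (Fin n)) f d} := by
    refine ⟨?_, MSaux.theF m n hm0 hn0 hmn, MSaux.theF_good m n hm0 hn0 hmn⟩
    rw [MSaux.count_eq m n]
    exact Nat.le_mul_of_pos_right m hn0
  have hub : ∀ d ∈ {d : ℕ | d ≤ edgeCount (completeBipartiteGraph (Fin m) (Fin n)) ∧
      ∃ f : Fin (edgeCount (completeBipartiteGraph (Fin m) (Fin n)))
        ≃ (completeBipartiteGraph (Fin m) (Fin n)).edgeSet,
        LinearGood (completeBipartiteGraph (Fin m) (Fin n)) f d}, d ≤ m := by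
    rintro d ⟨hd1, f', hf'⟩
    exact MSaux.upper_bound m n hm0 hmn hd1 f' hf'
  unfold ms
  exact le_antisymm (csSup_le ⟨m, hmemS⟩ hub) (le_csSup ⟨m, hub⟩ hmemS)
end

section
/- For every integer n ≥ 2, the matching sequencibility of the complete bipartite graph K_{n,n} equals n - 1. -/
/-! ### Auxiliary material -/

abbrev KG (n : ℕ) : SimpleGraph (Fin n ⊕ Fin n) := completeBipartiteGraph (Fin n) (Fin n)

lemma mem_KG_edgeSet {n : ℕ} (e : Sym2 (Fin n ⊕ Fin n)) :
    e ∈ (KG n).edgeSet ↔ ∃ a b : Fin n, e = s(Sum.inl a, Sum.inr b) := by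
  induction e using Sym2.ind with
  | _ x y =>
    cases x <;> cases y <;>
      simp [SimpleGraph.mem_edgeSet, Sym2.eq_iff, eq_comm]

/-- The edge of `KG n` with endpoints `a` (left) and `b` (right). -/
def edgeOf {n : ℕ} (a b : Fin n) : (KG n).edgeSet :=
  ⟨s(Sum.inl a, Sum.inr b), by rw [mem_KG_edgeSet]; exact ⟨a, b, rfl⟩⟩

lemma edgeOf_bijective (n : ℕ) :
    Function.Bijective (fun p : Fin n × Fin n => edgeOf p.1 p.2) := by
  constructor
  · rintro ⟨a, b⟩ ⟨a', b'⟩ h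
    have h' : s(Sum.inl a, Sum.inr b) = (s(Sum.inl a', Sum.inr b') : Sym2 (Fin n ⊕ Fin n)) :=
      congrArg Subtype.val h
    rw [Sym2.eq_iff] at h'
    rcases h' with ⟨h1, h2⟩ | ⟨h1, h2⟩ <;> simp_all
  · rintro ⟨e, he⟩
    obtain ⟨a, b, rfl⟩ := (mem_KG_edgeSet e).mp he
    exact ⟨(a, b), rfl⟩

noncomputable def EE (n : ℕ) : Fin n × Fin n ≃ (KG n).edgeSet :=
  Equiv.ofBijective _ (edgeOf_bijective n)

lemma EE_apply (n : ℕ) (p : Fin n × Fin n) :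
    ((EE n p : (KG n).edgeSet) : Sym2 (Fin n ⊕ Fin n)) = s(Sum.inl p.1, Sum.inr p.2) := rfl

lemma KG_edgeCount (n : ℕ) : edgeCount (KG n) = n * n := by
  rw [edgeCount, ← Nat.card_congr (EE n)]
  simp [Nat.card_prod]

lemma disj_iff {n : ℕ} (a b a' b' : Fin n) :
    edgesDisjoint (s(Sum.inl a, Sum.inr b) : Sym2 (Fin n ⊕ Fin n)) s(Sum.inl a', Sum.inr b')
      ↔ a ≠ a' ∧ b ≠ b' := by
  constructor
  · intro h
    refine ⟨fun hh => h (Sum.inl a) (by simp) (by simp [hh]),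
            fun hh => h (Sum.inr b) (by simp) (by simp [hh])⟩
  · rintro ⟨h1, h2⟩ v hv hv'
    simp only [Sym2.mem_iff] at hv hv'
    rcases hv with rfl | rfl <;> rcases hv' with h | h <;> simp_all

lemma arith_core {n : ℕ} (hn : 2 ≤ n) {u v : ℕ} (huv : u < v) (h : v < u + (n - 1)) :
    u % n ≠ v % n ∧ (u / n + u) % n ≠ (v / n + v) % n := by
  have hn0 : 0 < n := by omega
  constructor
  · intro he
    have hd : n ∣ v - u := (Nat.modEq_iff_dvd' huv.le).mp he
    have := Nat.le_of_dvd (by omega) hd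
    omega
  · intro he
    have hqm : u / n ≤ v / n := Nat.div_le_div_right huv.le
    have hq2 : v / n ≤ u / n + 1 := by
      have : v / n ≤ (u + n) / n := Nat.div_le_div_right (by omega)
      rwa [Nat.add_div_right u hn0] at this
    have hle : u / n + u ≤ v / n + v := by omega
    have hd : n ∣ (v / n + v) - (u / n + u) := (Nat.modEq_iff_dvd' hle).mp he
    have := Nat.le_of_dvd (by omega) hd
    omega

def phiFun {n : ℕ} (hn : 0 < n) (t : Fin (n * n)) : Fin n × Fin n :=
  (⟨(t : ℕ) % n, Nat.mod_lt _ hn⟩, ⟨((t : ℕ) / n + (t : ℕ)) % n, Nat.mod_lt _ hn⟩)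

lemma phiFun_injective {n : ℕ} (hn : 0 < n) : Function.Injective (phiFun hn) := by
  intro t t' h
  obtain ⟨h1, h2⟩ := Prod.mk.injEq _ _ _ _ ▸ h
  have h1' : (t : ℕ) % n = (t' : ℕ) % n := congrArg Fin.val h1
  have h2' : ((t : ℕ) / n + (t : ℕ)) % n = ((t' : ℕ) / n + (t' : ℕ)) % n := congrArg Fin.val h2
  have ht : (t : ℕ) < n * n := t.isLt
  have ht' : (t' : ℕ) < n * n := t'.isLt
  have hdt : (t : ℕ) / n < n := Nat.div_lt_of_lt_mul (by omega)
  have hdt' : (t' : ℕ) / n < n := Nat.div_lt_of_lt_mul (by omega)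
  have hm : ((t : ℕ) / n) % n = ((t' : ℕ) / n) % n := by
    have e1 : ((t : ℕ) / n + (t : ℕ)) % n = ((t : ℕ) / n % n + (t : ℕ) % n) % n :=
      Nat.add_mod _ _ _
    have e2 : ((t' : ℕ) / n + (t' : ℕ)) % n = ((t' : ℕ) / n % n + (t' : ℕ) % n) % n :=
      Nat.add_mod _ _ _
    have : ((t : ℕ) / n % n + (t : ℕ) % n) % n = ((t' : ℕ) / n % n + (t' : ℕ) % n) % n := by
      rw [← e1, ← e2]; exact h2'
    rw [h1'] at this
    have hmod : (t : ℕ) / n % n = (t : ℕ) / n := Nat.mod_eq_of_lt hdt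
    have hmod' : (t' : ℕ) / n % n = (t' : ℕ) / n := Nat.mod_eq_of_lt hdt'
    have hME : (t : ℕ) / n % n + (t' : ℕ) % n ≡ (t' : ℕ) / n % n + (t' : ℕ) % n [MOD n] := this
    have := Nat.ModEq.add_right_cancel' ((t' : ℕ) % n) hME
    rw [hmod, hmod'] at this
    exact this
  have hq : (t : ℕ) / n = (t' : ℕ) / n := by
    rwa [Nat.mod_eq_of_lt hdt, Nat.mod_eq_of_lt hdt'] at hm
  exact Fin.ext (by
    rw [← Nat.div_add_mod (t : ℕ) n, ← Nat.div_add_mod (t' : ℕ) n, hq, h1'])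

noncomputable def phiE {n : ℕ} (hn : 0 < n) : Fin (n * n) ≃ Fin n × Fin n :=
  Equiv.ofBijective _
    ((Fintype.bijective_iff_injective_and_card (phiFun hn)).mpr
      ⟨phiFun_injective hn, by simp⟩)

noncomputable def FF {n : ℕ} (hn : 0 < n) : Fin (edgeCount (KG n)) ≃ (KG n).edgeSet :=
  (finCongr (KG_edgeCount n)).trans ((phiE hn).trans (EE n))

lemma FF_apply {n : ℕ} (hn : 0 < n) (j : Fin (edgeCount (KG n))) :
    ((FF hn j : (KG n).edgeSet) : Sym2 (Fin n ⊕ Fin n)) =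
      s(Sum.inl ⟨(j : ℕ) % n, Nat.mod_lt _ hn⟩,
        Sum.inr ⟨((j : ℕ) / n + (j : ℕ)) % n, Nat.mod_lt _ hn⟩) := rfl

lemma FF_good {n : ℕ} (hn : 2 ≤ n) : LinearGood (KG n) (FF (by omega)) (n - 1) := by
  intro j k hne h1 h2
  rw [FF_apply, FF_apply]
  have hjk : (j : ℕ) ≠ (k : ℕ) := fun h => hne (Fin.ext h)
  rcases Nat.lt_or_ge (j : ℕ) (k : ℕ) with hlt | hge
  · obtain ⟨ha, hb⟩ := arith_core hn hlt h2
    exact (disj_iff _ _ _ _).mpr ⟨Fin.ne_of_val_ne ha, Fin.ne_of_val_ne hb⟩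
  · have hlt : (k : ℕ) < (j : ℕ) := by omega
    obtain ⟨ha, hb⟩ := arith_core hn hlt h1
    exact (disj_iff _ _ _ _).mpr ⟨Fin.ne_of_val_ne (Ne.symm ha), Fin.ne_of_val_ne (Ne.symm hb)⟩

lemma KG_upper {n : ℕ} (hn : 2 ≤ n) (d : ℕ)
    (hd : ∃ f : Fin (edgeCount (KG n)) ≃ (KG n).edgeSet, LinearGood (KG n) f d) :
    d ≤ n - 1 := by
  by_contra hcon
  have hdn : n ≤ d := by omega
  obtain ⟨f, hf⟩ := hd
  have hN : n < edgeCount (KG n) := by rw [KG_edgeCount]; nlinarith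
  let pos : ℕ → Fin (edgeCount (KG n)) := fun t => ⟨min t n, lt_of_le_of_lt (min_le_right _ _) hN⟩
  have hpos : ∀ t, t ≤ n → ((pos t : ℕ)) = t := fun t ht => min_eq_left ht
  let p : ℕ → Fin n × Fin n := fun t => (EE n).symm (f (pos t))
  have hfe : ∀ t, f (pos t) = EE n (p t) := fun t => (Equiv.apply_symm_apply (EE n) _).symm
  have key : ∀ t t', t < t' → t' ≤ n → t' - t < n →
      (p t).1 ≠ (p t').1 ∧ (p t).2 ≠ (p t').2 := by
    intro t t' h1 h2 h3
    have hne : pos t ≠ pos t' := by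
      intro h
      have := congrArg Fin.val h
      rw [hpos t (by omega), hpos t' h2] at this
      omega
    have hdisj := hf (pos t) (pos t') hne
      (by rw [hpos t (by omega), hpos t' h2]; omega)
      (by rw [hpos t (by omega), hpos t' h2]; omega)
    rw [hfe t, hfe t'] at hdisj
    rw [EE_apply, EE_apply] at hdisj
    exact (disj_iff _ _ _ _).mp hdisj
  -- pigeonhole for each coordinate
  have claim : ∀ (c : Fin n × Fin n → Fin n),
      (∀ t t', t < t' → t' ≤ n → t' - t < n → c (p t) ≠ c (p t')) →
      c (p 0) = c (p n) := by
    intro c hc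
    have hinjOn : Set.InjOn (fun t => c (p t)) (Finset.Icc 1 n) := by
      intro a ha b hb hab
      simp only [Finset.coe_Icc, Set.mem_Icc] at ha hb
      by_contra hne
      rcases lt_trichotomy a b with h | h | h
      · exact hc a b h hb.2 (by omega) hab
      · exact hne h
      · exact hc b a h ha.2 (by omega) hab.symm
    have hcard : ((Finset.Icc 1 n).image (fun t => c (p t))).card = n := by
      rw [Finset.card_image_of_injOn hinjOn, Nat.card_Icc]; omega
    have huniv : (Finset.Icc 1 n).image (fun t => c (p t)) = Finset.univ :=
      Finset.eq_univ_of_card _ (by rw [hcard, Fintype.card_fin])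
    have hmem : c (p 0) ∈ (Finset.Icc 1 n).image (fun t => c (p t)) := by
      rw [huniv]; exact Finset.mem_univ _
    obtain ⟨j, hj, hjeq⟩ := Finset.mem_image.mp hmem
    rw [Finset.mem_Icc] at hj
    by_cases hjn : j = n
    · rw [← hjeq, hjn]
    · exact absurd hjeq.symm (hc 0 j (by omega) hj.2 (by omega))
  have hL : (p 0).1 = (p n).1 := claim Prod.fst (fun t t' h1 h2 h3 => (key t t' h1 h2 h3).1)
  have hR : (p 0).2 = (p n).2 := claim Prod.snd (fun t t' h1 h2 h3 => (key t t' h1 h2 h3).2)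
  have hpp : p 0 = p n := Prod.ext hL hR
  have hff : f (pos 0) = f (pos n) := by rw [hfe 0, hfe n, hpp]
  have := congrArg Fin.val (f.injective hff)
  rw [hpos 0 (by omega), hpos n le_rfl] at this
  omega

/-- For every integer `n ≥ 2`, `ms (K_{n,n}) = n - 1`. -/
theorem ms_completeBipartiteGraph_eq (n : ℕ) (hn : 2 ≤ n) :
    ms (completeBipartiteGraph (Fin n) (Fin n)) = n - 1 := by
  have hn0 : 0 < n := by omega
  have hmem : n - 1 ∈ {d : ℕ | d ≤ edgeCount (KG n) ∧
      ∃ f : Fin (edgeCount (KG n)) ≃ (KG n).edgeSet, LinearGood (KG n) f d} := by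
    refine ⟨?_, ⟨FF hn0, ?_⟩⟩
    · rw [KG_edgeCount]
      have : n ≤ n * n := Nat.le_mul_of_pos_left n hn0
      omega
    · exact FF_good hn
  have hub : ∀ d ∈ {d : ℕ | d ≤ edgeCount (KG n) ∧
      ∃ f : Fin (edgeCount (KG n)) ≃ (KG n).edgeSet, LinearGood (KG n) f d}, d ≤ n - 1 :=
    fun d hd => KG_upper hn d hd.2
  unfold ms
  exact le_antisymm (csSup_le ⟨n - 1, hmem⟩ hub)
    (le_csSup ⟨edgeCount (KG n), fun d hd => hd.1⟩ hmem)
end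

section
/- For every integer m ≥ 2, there exists a cyclic ordering of the 2m² - m edges of the complete graph K_{2m} such that every m - 1 cyclically consecutive edges in the ordering are pairwise disjoint; consequently cms(K_{2m}) ≥ m - 1. -/
namespace CMSAux

variable (m : ℕ)

def vtx (hm : 2 ≤ m) (x : ZMod (2*m-1)) : Fin (2*m) :=
  ⟨x.val, by
    haveI : NeZero (2*m-1) := ⟨by omega⟩
    have := x.val_lt; omega⟩

def star (hm : 2 ≤ m) : Fin (2*m) := ⟨2*m-1, by omega⟩

lemma vtx_inj (hm : 2 ≤ m) {x y : ZMod (2*m-1)} (h : vtx m hm x = vtx m hm y) : x = y := by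
  haveI : NeZero (2*m-1) := ⟨by omega⟩
  exact ZMod.val_injective _ (congrArg Fin.val h)

lemma vtx_ne_star (hm : 2 ≤ m) (x : ZMod (2*m-1)) : vtx m hm x ≠ star m hm := by
  haveI : NeZero (2*m-1) := ⟨by omega⟩
  have := x.val_lt
  simp only [vtx, star, Fin.mk.injEq, ne_eq]
  omega

lemma castInj (hm : 2 ≤ m) {a b : ℕ} (ha : a < 2*m-1) (hb : b < 2*m-1)
    (h : (a : ZMod (2*m-1)) = (b : ZMod (2*m-1))) : a = b := by
  rwa [ZMod.natCast_eq_natCast_iff', Nat.mod_eq_of_lt ha, Nat.mod_eq_of_lt hb] at h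

lemma cast_eq_zero (hm : 2 ≤ m) {s : ℕ} (hs : s < 2*(2*m-1))
    (h : (s : ZMod (2*m-1)) = ((0:ℕ) : ZMod (2*m-1))) : s = 0 ∨ s = 2*m-1 := by
  have h2 : s % (2*m-1) = 0 := by
    have := (ZMod.natCast_eq_natCast_iff' s 0 (2*m-1)).mp h
    simpa [Nat.zero_mod] using this
  rcases Nat.lt_or_ge s (2*m-1) with hlt | hge
  · left; rwa [Nat.mod_eq_of_lt hlt] at h2
  · right
    rw [Nat.mod_eq_sub_mod hge, Nat.mod_eq_of_lt (by omega)] at h2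
    omega

def edge (hm : 2 ≤ m) (r : ZMod (2*m-1)) (i : ℕ) : Sym2 (Fin (2*m)) :=
  if i = 0 then s(star m hm, vtx m hm r)
  else s(vtx m hm (r + (i:ZMod (2*m-1))), vtx m hm (r - (i:ZMod (2*m-1))))

lemma edge_mem (hm : 2 ≤ m) (r : ZMod (2*m-1)) {i : ℕ} (hi : i < m) :
    edge m hm r i ∈ (⊤ : SimpleGraph (Fin (2*m))).edgeSet := by
  rw [edge]
  split_ifs with h0
  · simp only [SimpleGraph.mem_edgeSet, SimpleGraph.top_adj]
    exact fun h => vtx_ne_star m hm r h.symm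
  · simp only [SimpleGraph.mem_edgeSet, SimpleGraph.top_adj]
    intro h
    have h' := vtx_inj m hm h
    have : ((i + i : ℕ) : ZMod (2*m-1)) = ((0 : ℕ) : ZMod (2*m-1)) := by
      push_cast; linear_combination h'
    have := castInj m hm (by omega) (by omega) this
    omega

lemma edge_inj (hm : 2 ≤ m) {r r' : ZMod (2*m-1)} {i i' : ℕ} (hi : i < m) (hi' : i' < m)
    (h : edge m hm r i = edge m hm r' i') : r = r' ∧ i = i' := by
  rw [edge, edge] at h
  split_ifs at h with h0 h0' h0'
  · subst h0; subst h0'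
    rw [Sym2.eq_iff] at h
    rcases h with ⟨-, h2⟩ | ⟨h1, -⟩
    · exact ⟨vtx_inj m hm h2, rfl⟩
    · exact absurd h1.symm (vtx_ne_star m hm _)
  · rw [Sym2.eq_iff] at h
    rcases h with ⟨h1, -⟩ | ⟨h1, -⟩ <;> exact absurd h1.symm (vtx_ne_star m hm _)
  · rw [Sym2.eq_iff] at h
    rcases h with ⟨h1, -⟩ | ⟨-, h2⟩
    · exact absurd h1 (vtx_ne_star m hm _)
    · exact absurd h2 (vtx_ne_star m hm _)
  · rw [Sym2.eq_iff] at h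
    rcases h with ⟨h1, h2⟩ | ⟨h1, h2⟩
    · have h1' := vtx_inj m hm h1
      have h2' := vtx_inj m hm h2
      have hii : ((i + i : ℕ) : ZMod (2*m-1)) = ((i' + i' : ℕ) : ZMod (2*m-1)) := by
        push_cast; linear_combination h1' - h2'
      have hii' := castInj m hm (by omega) (by omega) hii
      have hieq : i = i' := by omega
      subst hieq
      refine ⟨?_, rfl⟩
      have : r + (i : ZMod (2*m-1)) = r' + (i : ZMod (2*m-1)) := h1'
      exact add_right_cancel this
    · have h1' := vtx_inj m hm h1
      have h2' := vtx_inj m hm h2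
      have hii : ((i + i + (i' + i') : ℕ) : ZMod (2*m-1)) = ((0:ℕ) : ZMod (2*m-1)) := by
        push_cast; linear_combination h1' - h2'
      have := cast_eq_zero m hm (by omega) hii
      omega

lemma disj_mk {V : Type*} {x y u v : V} (h1 : x ≠ u) (h2 : x ≠ v) (h3 : y ≠ u) (h4 : y ≠ v) :
    edgesDisjoint s(x,y) s(u,v) := by
  intro w hw hw'
  rw [Sym2.mem_iff] at hw hw'
  rcases hw with rfl | rfl <;> rcases hw' with rfl | rfl <;> simp_all

lemma same_round (hm : 2 ≤ m) (r : ZMod (2*m-1)) {i j : ℕ} (hi : i < m) (hj : j < m)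
    (hij : i ≠ j) (hi0 : i ≠ 0) : edgesDisjoint (edge m hm r i) (edge m hm r j) := by
  rw [edge, if_neg hi0, edge]
  split_ifs with hj0
  · subst hj0
    refine disj_mk ?_ ?_ ?_ ?_
    · exact vtx_ne_star m hm _
    · intro h
      have h' := vtx_inj m hm h
      have : ((i : ℕ) : ZMod (2*m-1)) = ((0 : ℕ) : ZMod (2*m-1)) := by
        push_cast; linear_combination h'
      have := castInj m hm (by omega) (by omega) this; omega
    · exact vtx_ne_star m hm _
    · intro h
      have h' := vtx_inj m hm h
      have : ((i : ℕ) : ZMod (2*m-1)) = ((0 : ℕ) : ZMod (2*m-1)) := by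
        push_cast; linear_combination -h'
      have := castInj m hm (by omega) (by omega) this; omega
  · refine disj_mk ?_ ?_ ?_ ?_
    · intro h
      have h' := vtx_inj m hm h
      have : ((i : ℕ) : ZMod (2*m-1)) = ((j : ℕ) : ZMod (2*m-1)) := by
        linear_combination h'
      have := castInj m hm (by omega) (by omega) this; omega
    · intro h
      have h' := vtx_inj m hm h
      have : ((i + j : ℕ) : ZMod (2*m-1)) = ((0 : ℕ) : ZMod (2*m-1)) := by
        push_cast; linear_combination h'
      have := castInj m hm (by omega) (by omega) this; omega
    · intro h
      have h' := vtx_inj m hm h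
      have : ((i + j : ℕ) : ZMod (2*m-1)) = ((0 : ℕ) : ZMod (2*m-1)) := by
        push_cast; linear_combination -h'
      have := castInj m hm (by omega) (by omega) this; omega
    · intro h
      have h' := vtx_inj m hm h
      have : ((i : ℕ) : ZMod (2*m-1)) = ((j : ℕ) : ZMod (2*m-1)) := by
        linear_combination -h'
      have := castInj m hm (by omega) (by omega) this; omega

lemma cross_round (hm : 2 ≤ m) (r : ZMod (2*m-1)) {a b : ℕ} (ha : a < m) (hb : b + 2 ≤ a) :
    edgesDisjoint (edge m hm r a) (edge m hm (r+1) b) := by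
  rw [edge, if_neg (by omega : a ≠ 0), edge]
  split_ifs with hb0
  · subst hb0
    refine disj_mk (vtx_ne_star m hm _) ?_ (vtx_ne_star m hm _) ?_
    · intro h
      have h' := vtx_inj m hm h
      have : ((a : ℕ) : ZMod (2*m-1)) = ((1 : ℕ) : ZMod (2*m-1)) := by
        push_cast; linear_combination h'
      have := castInj m hm (by omega) (by omega) this; omega
    · intro h
      have h' := vtx_inj m hm h
      have : ((a + 1 : ℕ) : ZMod (2*m-1)) = ((0 : ℕ) : ZMod (2*m-1)) := by
        push_cast; linear_combination -h'
      have := castInj m hm (by omega) (by omega) this; omega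
  · refine disj_mk ?_ ?_ ?_ ?_
    · intro h
      have h' := vtx_inj m hm h
      have : ((a : ℕ) : ZMod (2*m-1)) = ((b + 1 : ℕ) : ZMod (2*m-1)) := by
        push_cast; linear_combination h'
      have := castInj m hm (by omega) (by omega) this; omega
    · intro h
      have h' := vtx_inj m hm h
      have : ((a + b : ℕ) : ZMod (2*m-1)) = ((1 : ℕ) : ZMod (2*m-1)) := by
        push_cast; linear_combination h'
      have := castInj m hm (by omega) (by omega) this; omega
    · intro h
      have h' := vtx_inj m hm h
      have : ((a + b + 1 : ℕ) : ZMod (2*m-1)) = ((0 : ℕ) : ZMod (2*m-1)) := by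
        push_cast; linear_combination -h'
      have := castInj m hm (by omega) (by omega) this; omega
    · intro h
      have h' := vtx_inj m hm h
      have : ((b : ℕ) : ZMod (2*m-1)) = ((a + 1 : ℕ) : ZMod (2*m-1)) := by
        push_cast; linear_combination h'
      have := castInj m hm (by omega) (by omega) this; omega

lemma edgesDisjoint_symm {V : Type*} {e₁ e₂ : Sym2 V} (h : edgesDisjoint e₁ e₂) :
    edgesDisjoint e₂ e₁ := fun v hv hv' => h v hv' hv

def g (hm : 2 ≤ m) (n : ℕ) : Sym2 (Fin (2*m)) :=
  edge m hm ((n / m : ℕ) : ZMod (2*m-1)) (n % m)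

lemma g_eq (hm : 2 ≤ m) (q i : ℕ) (hi : i < m) :
    g m hm (q*m+i) = edge m hm ((q:ℕ) : ZMod (2*m-1)) i := by
  rw [g]
  have h1 : (q*m+i)/m = q := by
    rw [add_comm, Nat.add_mul_div_right _ _ (by omega : 0 < m)]
    simp [Nat.div_eq_of_lt hi]
  have h2 : (q*m+i) % m = i := by
    rw [add_comm, Nat.add_mul_mod_self_right, Nat.mod_eq_of_lt hi]
  rw [h1, h2]

lemma g_period (hm : 2 ≤ m) (n : ℕ) : g m hm (n + (2*m-1)*m) = g m hm n := by
  rw [g, g, Nat.add_mul_div_right _ _ (by omega : 0 < m), Nat.add_mul_mod_self_right]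
  congr 1
  push_cast [ZMod.natCast_self]
  ring

lemma g_disj (hm : 2 ≤ m) (n t : ℕ) (ht1 : 1 ≤ t) (ht : t + 2 ≤ m) :
    edgesDisjoint (g m hm n) (g m hm (n + t)) := by
  obtain ⟨q, i, hi, rfl⟩ : ∃ q i, i < m ∧ n = q*m + i :=
    ⟨n/m, n%m, Nat.mod_lt _ (by omega), by rw [Nat.div_add_mod']⟩
  by_cases hcase : i + t < m
  · have e1 : q*m + i + t = q*m + (i+t) := by omega
    rw [e1, g_eq m hm q i hi, g_eq m hm q (i+t) hcase]
    rcases Nat.eq_zero_or_pos i with rfl | hipos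
    · exact edgesDisjoint_symm (same_round m hm _ hcase (by omega) (by omega) (by omega))
    · exact same_round m hm _ hi hcase (by omega) (by omega)
  · have e2 : q*m + i + t = (q+1)*m + (i+t-m) := by
      have : (q+1)*m = q*m + m := by ring
      omega
    rw [e2, g_eq m hm q i hi, g_eq m hm (q+1) (i+t-m) (by omega)]
    have hc : (((q+1):ℕ) : ZMod (2*m-1)) = ((q:ℕ) : ZMod (2*m-1)) + 1 := by push_cast; ring
    rw [hc]
    exact cross_round m hm _ hi (by omega)

lemma hE (hm : 2 ≤ m) : 2*m^2 - m = (2*m-1)*m := by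
  rw [tsub_mul]; congr 1 <;> ring

lemma Epos (hm : 2 ≤ m) : 0 < 2*m^2 - m := by
  rw [hE m hm]; exact Nat.mul_pos (by omega) (by omega)

def F (hm : 2 ≤ m) (x : ZMod (2*m^2 - m)) : (⊤ : SimpleGraph (Fin (2*m))).edgeSet :=
  ⟨g m hm x.val, by rw [g]; exact edge_mem m hm _ (Nat.mod_lt _ (by omega))⟩

lemma F_inj (hm : 2 ≤ m) : Function.Injective (F m hm) := by
  haveI : NeZero (2*m^2 - m) := ⟨by have := Epos m hm; omega⟩
  intro x y hxy
  have h : g m hm x.val = g m hm y.val := congrArg Subtype.val hxy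
  rw [g, g] at h
  have hxv : x.val < (2*m-1)*m := by rw [← hE m hm]; exact x.val_lt
  have hyv : y.val < (2*m-1)*m := by rw [← hE m hm]; exact y.val_lt
  have hdx : x.val / m < 2*m-1 := Nat.div_lt_of_lt_mul (mul_comm (2*m-1) m ▸ hxv)
  have hdy : y.val / m < 2*m-1 := Nat.div_lt_of_lt_mul (mul_comm (2*m-1) m ▸ hyv)
  obtain ⟨h1, h2⟩ := edge_inj m hm (Nat.mod_lt _ (by omega)) (Nat.mod_lt _ (by omega)) h
  have h1' := castInj m hm hdx hdy h1
  apply ZMod.val_injective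
  have ex := Nat.div_add_mod x.val m
  have ey := Nat.div_add_mod y.val m
  rw [← ex, ← ey, h1', h2]

lemma card_edges (hm : 2 ≤ m) :
    Fintype.card (⊤ : SimpleGraph (Fin (2*m))).edgeSet = 2*m^2 - m := by
  classical
  have h := SimpleGraph.card_edgeFinset_top_eq_card_choose_two (V := Fin (2*m))
  rw [SimpleGraph.edgeFinset, Set.toFinset_card] at h
  rw [h, Fintype.card_fin, Nat.choose_two_right]
  have h2 : 2*m*(2*m-1) = 2*((2*m^2 - m)) := by rw [hE m hm]; ring
  rw [h2, Nat.mul_div_cancel_left _ (by norm_num : 0 < 2)]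

noncomputable def equivF (hm : 2 ≤ m) :
    ZMod (2*m^2 - m) ≃ (⊤ : SimpleGraph (Fin (2*m))).edgeSet := by
  haveI : NeZero (2*m^2 - m) := ⟨by have := Epos m hm; omega⟩
  exact Equiv.ofBijective (F m hm)
    ((Fintype.bijective_iff_injective_and_card _).mpr
      ⟨F_inj m hm, by rw [ZMod.card, card_edges m hm]⟩)

lemma equivF_apply (hm : 2 ≤ m) (x : ZMod (2*m^2 - m)) :
    ((equivF m hm x : Sym2 (Fin (2*m)))) = g m hm x.val := rfl

lemma key_disj (hm : 2 ≤ m) (x : ZMod (2*m^2 - m)) (t : ℕ) (ht1 : 1 ≤ t) (ht2 : t + 2 ≤ m) :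
    edgesDisjoint (g m hm x.val) (g m hm ((x + (t : ZMod (2*m^2 - m))).val)) := by
  haveI : NeZero (2*m^2 - m) := ⟨by have := Epos m hm; omega⟩
  have hE' := hE m hm
  have hvx := x.val_lt
  have hmle : m ≤ (2*m-1)*m := Nat.le_mul_of_pos_left m (by omega)
  have hlt : t < 2*m^2 - m := by omega
  have hv : (x + (t : ZMod (2*m^2 - m))).val = (x.val + t) % (2*m^2 - m) := by
    rw [ZMod.val_add, ZMod.val_natCast, Nat.mod_eq_of_lt hlt]
  rw [hv]
  rcases Nat.lt_or_ge (x.val + t) (2*m^2 - m) with hc | hc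
  · rw [Nat.mod_eq_of_lt hc]; exact g_disj m hm _ t ht1 ht2
  · rw [Nat.mod_eq_sub_mod hc, Nat.mod_eq_of_lt (by omega)]
    have e3 : (x.val + t - (2*m^2 - m)) + (2*m-1)*m = x.val + t := by omega
    have hper := g_period m hm (x.val + t - (2*m^2 - m))
    rw [e3] at hper
    rw [← hper]
    exact g_disj m hm _ t ht1 ht2

end CMSAux

/-- For every integer `m ≥ 2` there is a cyclic ordering of the
`2m² - m` edges of `K_{2m}` in which every `m - 1` cyclically consecutive edges are
pairwise disjoint; consequently `cms (K_{2m}) ≥ m - 1`. -/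
theorem cms_lower_bound_even (m : ℕ) (hm : 2 ≤ m) :
    (∃ f : ZMod (2 * m ^ 2 - m) ≃ (⊤ : SimpleGraph (Fin (2 * m))).edgeSet,
      CyclicGood (⊤ : SimpleGraph (Fin (2 * m))) f (m - 1)) ∧
    m - 1 ≤ cms (⊤ : SimpleGraph (Fin (2 * m))) := by
  haveI : NeZero (2*m^2 - m) := ⟨by have := CMSAux.Epos m hm; omega⟩
  have hgood : CyclicGood (⊤ : SimpleGraph (Fin (2 * m))) (CMSAux.equivF m hm) (m - 1) := by
    intro i j k hj hk hjk
    have main : ∀ j' k' : ℕ, j' < k' → k' < m - 1 →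
        edgesDisjoint ((CMSAux.equivF m hm (i + (j' : ZMod (2*m^2-m)))) : Sym2 (Fin (2*m)))
          ((CMSAux.equivF m hm (i + (k' : ZMod (2*m^2-m)))) : Sym2 (Fin (2*m))) := by
      intro j' k' hlt hk'
      rw [CMSAux.equivF_apply, CMSAux.equivF_apply]
      have hcast : ((k' : ℕ) : ZMod (2*m^2-m)) =
          ((j' : ℕ) : ZMod (2*m^2-m)) + ((k' - j' : ℕ) : ZMod (2*m^2-m)) := by
        rw [← Nat.cast_add]; congr 1; omega
      rw [hcast, ← add_assoc]
      exact CMSAux.key_disj m hm (i + (j' : ZMod (2*m^2-m))) (k' - j') (by omega) (by omega)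
    rcases Nat.lt_or_ge j k with hlt | hge
    · exact main j k hlt hk
    · exact CMSAux.edgesDisjoint_symm (main k j (by omega) hj)
  refine ⟨⟨CMSAux.equivF m hm, hgood⟩, ?_⟩
  have hcount : edgeCount (⊤ : SimpleGraph (Fin (2*m))) = 2*m^2 - m := by
    rw [edgeCount, Nat.card_eq_fintype_card]
    exact CMSAux.card_edges m hm
  apply le_csSup
  · refine ⟨2*m^2 - m, fun d hd => ?_⟩
    obtain ⟨f', hf'⟩ := hd
    by_contra hlt
    push_neg at hlt
    have hpos := CMSAux.Epos m hm
    have h := hf' 0 0 (edgeCount (⊤ : SimpleGraph (Fin (2*m)))) (by omega) (by omega) (by omega)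
    rw [Nat.cast_zero, add_zero, ZMod.natCast_self, add_zero] at h
    exact h _ (Sym2.out_fst_mem _) (Sym2.out_fst_mem _)
  · show m - 1 ∈ {d : ℕ | ∃ f : ZMod (edgeCount (⊤ : SimpleGraph (Fin (2*m)))) ≃
        (⊤ : SimpleGraph (Fin (2*m))).edgeSet, CyclicGood (⊤ : SimpleGraph (Fin (2*m))) f d}
    simp only [Set.mem_setOf_eq]
    exact hcount.symm ▸ ⟨CMSAux.equivF m hm, hgood⟩
end

section
/- For every integer m ≥ 2, there exists a cyclic ordering of the 2m² + m edges of the complete graph K_{2m+1} such that every m - 1 cyclically consecutive edges in the ordering are pairwise disjoint; consequently cms(K_{2m+1}) ≥ m - 1. -/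
/-! ### Auxiliary constructions -/

/-- The canonical identification of `ZMod (2m+1)` with `Fin (2m+1)`. -/
def cmsW (m : ℕ) (x : ZMod (2 * m + 1)) : Fin (2 * m + 1) :=
  ⟨x.val, ZMod.val_lt x⟩

lemma cmsW_inj (m : ℕ) : Function.Injective (cmsW m) := fun x y h =>
  ZMod.val_injective _ (congrArg Fin.val h)

lemma cms_cast_eq (m : ℕ) {x y : ℕ} (hx : x < 2 * m + 1) (hy : y < 2 * m + 1)
    (h : (x : ZMod (2 * m + 1)) = (y : ZMod (2 * m + 1))) : x = y := by
  calc x = (x : ZMod (2 * m + 1)).val := (ZMod.val_cast_of_lt hx).symm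
    _ = (y : ZMod (2 * m + 1)).val := by rw [h]
    _ = y := ZMod.val_cast_of_lt hy

lemma cms_cast_ne_zero (m : ℕ) {x : ℕ} (hx0 : 0 < x) (hx : x < 2 * m + 1) :
    (x : ZMod (2 * m + 1)) ≠ 0 := by
  intro h
  have hd : (2 * m + 1) ∣ x := (ZMod.natCast_eq_zero_iff x _).mp h
  have := Nat.le_of_dvd hx0 hd
  omega

/-- The core disjointness lemma: two edges `{a-r, a+r+1}` and `{b-s, b+s+1}` are
disjoint if they lie in the same near-perfect matching (`b = a`, `r ≠ s`) or in
consecutive ones with `s + 2 ≤ r`. -/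
lemma cms_disj (m : ℕ) (hm : 2 ≤ m) (a b : ZMod (2 * m + 1)) (r s : ℕ)
    (hr : r < m) (hs : s < m)
    (hcase : (b = a ∧ r ≠ s) ∨ (b = a + 1 ∧ s + 2 ≤ r)) :
    edgesDisjoint
      (s(cmsW m (a - (r : ZMod (2 * m + 1))), cmsW m (a + (r : ZMod (2 * m + 1)) + 1)) :
        Sym2 (Fin (2 * m + 1)))
      s(cmsW m (b - (s : ZMod (2 * m + 1))), cmsW m (b + (s : ZMod (2 * m + 1)) + 1)) := by
  intro v hv hv'
  rw [Sym2.mem_iff] at hv hv'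
  rcases hcase with ⟨rfl, hrs⟩ | ⟨rfl, hsr⟩
  · rcases hv with rfl | rfl <;> rcases hv' with h | h <;>
      replace h := cmsW_inj m h
    · exact hrs (cms_cast_eq m (by omega) (by omega)
        (by push_cast; linear_combination -h))
    · exact cms_cast_ne_zero m (x := r + s + 1) (by omega) (by omega)
        (by push_cast; linear_combination -h)
    · exact cms_cast_ne_zero m (x := r + s + 1) (by omega) (by omega)
        (by push_cast; linear_combination h)
    · exact hrs (cms_cast_eq m (by omega) (by omega)
        (by push_cast; linear_combination h))
  · rcases hv with rfl | rfl <;> rcases hv' with h | h <;>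
      replace h := cmsW_inj m h
    · have := cms_cast_eq m (x := s) (y := r + 1) (by omega) (by omega)
        (by push_cast; linear_combination h)
      omega
    · exact cms_cast_ne_zero m (x := r + s + 2) (by omega) (by omega)
        (by push_cast; linear_combination -h)
    · exact cms_cast_ne_zero m (x := r + s) (by omega) (by omega)
        (by push_cast; linear_combination h)
    · have := cms_cast_eq m (x := r) (y := s + 1) (by omega) (by omega)
        (by push_cast; linear_combination h)
      omega

/-- The explicit cyclic ordering of the edges of `K_{2m+1}`. -/
def cmsF (m : ℕ) (t : ZMod (2 * m ^ 2 + m)) : Sym2 (Fin (2 * m + 1)) :=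
  s(cmsW m (((t.val / m : ℕ) : ZMod (2 * m + 1)) - ((t.val % m : ℕ) : ZMod (2 * m + 1))),
    cmsW m (((t.val / m : ℕ) : ZMod (2 * m + 1)) + ((t.val % m : ℕ) : ZMod (2 * m + 1)) + 1))

/-- For every integer `m ≥ 2` there is a cyclic ordering of the
`2m² + m` edges of `K_{2m+1}` in which every `m - 1` cyclically consecutive edges are
pairwise disjoint; consequently `cms (K_{2m+1}) ≥ m - 1`. -/
theorem cms_lower_bound_odd (m : ℕ) (hm : 2 ≤ m) :
    (∃ f : ZMod (2 * m ^ 2 + m) ≃ (⊤ : SimpleGraph (Fin (2 * m + 1))).edgeSet,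
      CyclicGood (⊤ : SimpleGraph (Fin (2 * m + 1))) f (m - 1)) ∧
    m - 1 ≤ cms (⊤ : SimpleGraph (Fin (2 * m + 1))) := by
  classical
  set n := 2 * m + 1 with hn
  set N := 2 * m ^ 2 + m with hN
  have hNn : N = m * n := by rw [hn, hN]; ring
  have hNpos : 0 < N := by rw [hN]; positivity
  haveI : NeZero N := ⟨by omega⟩
  set G := (⊤ : SimpleGraph (Fin n)) with hG
  -- values of cmsF are genuine edges
  have hmem : ∀ t : ZMod N, cmsF m t ∈ G.edgeSet := by
    intro t
    have hvr : t.val % m < m := Nat.mod_lt _ (by omega)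
    simp only [cmsF, hG, SimpleGraph.mem_edgeSet, SimpleGraph.top_adj]
    intro h
    replace h := cmsW_inj m h
    exact cms_cast_ne_zero m (x := 2 * (t.val % m) + 1) (by omega) (by omega)
      (by push_cast; linear_combination -h)
  -- basic div/mod facts
  have hdm : ∀ x a r : ℕ, x = m * a + r → r < m → x / m = a ∧ x % m = r := by
    intro x a r hx hrm
    exact (Nat.div_mod_unique (by omega)).mpr ⟨by omega, hrm⟩
  have hdivlt : ∀ t : ZMod N, t.val / m < n := by
    intro t
    have h1 := t.val_lt
    have h2 : t.val < m * n := by omega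
    exact Nat.div_lt_of_lt_mul h2
  -- injectivity
  have hFinj : Function.Injective (fun t : ZMod N => (⟨cmsF m t, hmem t⟩ : G.edgeSet)) := by
    intro t t' h
    have h' : cmsF m t = cmsF m t' := congrArg Subtype.val h
    simp only [cmsF, Sym2.eq_iff] at h'
    obtain ⟨a, ha⟩ : ∃ a, t.val / m = a := ⟨_, rfl⟩
    obtain ⟨r, hr⟩ : ∃ r, t.val % m = r := ⟨_, rfl⟩
    obtain ⟨b, hb⟩ : ∃ b, t'.val / m = b := ⟨_, rfl⟩
    obtain ⟨s, hs⟩ : ∃ s, t'.val % m = s := ⟨_, rfl⟩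
    rw [ha, hr, hb, hs] at h'
    have han : a < n := by rw [← ha]; exact hdivlt t
    have hbn : b < n := by rw [← hb]; exact hdivlt t'
    have hrm : r < m := by rw [← hr]; exact Nat.mod_lt _ (by omega)
    have hsm : s < m := by rw [← hs]; exact Nat.mod_lt _ (by omega)
    have key : a = b ∧ r = s := by
      rcases h' with ⟨h1, h2⟩ | ⟨h1, h2⟩
      · replace h1 := cmsW_inj m h1
        replace h2 := cmsW_inj m h2
        have hr' : (2 * r + 1 : ℕ) = (2 * s + 1 : ℕ) := by
          refine cms_cast_eq m (by omega) (by omega) ?_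
          push_cast
          linear_combination h2 - h1
        have hrs : r = s := by omega
        subst hrs
        have hab : a = b := by
          refine cms_cast_eq m han hbn ?_
          linear_combination h2
        exact ⟨hab, rfl⟩
      · exfalso
        replace h1 := cmsW_inj m h1
        replace h2 := cmsW_inj m h2
        have h3 : ((2 * r + 2 * s + 2 : ℕ) : ZMod n) = 0 := by
          push_cast
          linear_combination h2 - h1
        have hdvd : n ∣ 2 * r + 2 * s + 2 := (ZMod.natCast_eq_zero_iff _ _).mp h3
        obtain ⟨k, hk⟩ := hdvd
        have hk2 : k < 2 := by
          by_contra hc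
          push_neg at hc
          have h4 : n * 2 ≤ n * k := Nat.mul_le_mul_left _ hc
          rw [← hk] at h4
          omega
        interval_cases k <;> omega
    obtain ⟨rfl, rfl⟩ := key
    have hval : t.val = t'.val := by
      have e1 := Nat.div_add_mod t.val m
      have e2 := Nat.div_add_mod t'.val m
      rw [ha, hr] at e1
      rw [hb, hs] at e2
      omega
    exact ZMod.val_injective _ hval
  -- bijectivity via cardinality
  have h6 : G.edgeFinset.card = (Fintype.card (Fin n)).choose 2 :=
    SimpleGraph.card_edgeFinset_top_eq_card_choose_two
  have hcard : Fintype.card G.edgeSet = N := by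
    rw [← SimpleGraph.edgeFinset_card, h6, Fintype.card_fin, Nat.choose_two_right]
    have h0 : n - 1 = 2 * m := by omega
    have h1 : n * (2 * m) = 2 * N := by rw [hn, hN]; ring
    rw [h0, h1]
    omega
  have hbij : Function.Bijective (fun t : ZMod N => (⟨cmsF m t, hmem t⟩ : G.edgeSet)) := by
    rw [Fintype.bijective_iff_injective_and_card]
    exact ⟨hFinj, by rw [hcard, ZMod.card]⟩
  let f : ZMod N ≃ G.edgeSet := Equiv.ofBijective _ hbij
  have hf : ∀ t, (f t : Sym2 (Fin n)) = cmsF m t := fun t => rfl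
  -- CyclicGood
  have hgood : CyclicGood G f (m - 1) := by
    have main : ∀ (i : ZMod N) (j k : ℕ), j < m - 1 → k < m - 1 → j < k →
        edgesDisjoint (f (i + (j : ZMod N)) : Sym2 (Fin n))
          (f (i + (k : ZMod N)) : Sym2 (Fin n)) := by
      intro i j k hj hk hjk
      obtain ⟨t, ht⟩ : ∃ t : ZMod N, t = i + (j : ZMod N) := ⟨_, rfl⟩
      obtain ⟨t', ht'⟩ : ∃ t' : ZMod N, t' = i + (k : ZMod N) := ⟨_, rfl⟩
      rw [← ht, ← ht']
      obtain ⟨d, hd⟩ : ∃ d, k - j = d := ⟨_, rfl⟩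
      have hd1 : 1 ≤ d := by omega
      have hd2 : d + 2 ≤ m := by omega
      have htt' : t' = t + (d : ZMod N) := by
        rw [ht, ht', add_assoc]
        congr 1
        have hcast : (j : ZMod N) + ((d : ℕ) : ZMod N) = ((j + d : ℕ) : ZMod N) := by
          push_cast
          ring
        rw [hcast, show j + d = k by omega]
      obtain ⟨p, hp⟩ : ∃ p, t.val = p := ⟨_, rfl⟩
      have hq : t'.val = (p + d) % N := by
        rw [htt', ZMod.val_add, hp, ZMod.val_natCast_of_lt (show d < N by omega)]
      rw [hf, hf]
      simp only [cmsF]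
      obtain ⟨a, ha⟩ : ∃ a, p / m = a := ⟨_, rfl⟩
      obtain ⟨r, hr⟩ : ∃ r, p % m = r := ⟨_, rfl⟩
      rw [hp, ha, hr]
      have hpam : p = m * a + r := by rw [← ha, ← hr]; exact (Nat.div_add_mod p m).symm
      have hrm : r < m := by rw [← hr]; exact Nat.mod_lt _ (by omega)
      have han : a < n := by rw [← ha, ← hp]; exact hdivlt t
      have hpN : p < N := by rw [← hp]; exact t.val_lt
      by_cases hcase1 : p + d < N
      · have hq' : t'.val = p + d := by rw [hq, Nat.mod_eq_of_lt hcase1]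
        by_cases hcase2 : r + d < m
        · -- same block
          obtain ⟨hdiv, hmod⟩ := hdm (p + d) a (r + d) (by omega) hcase2
          rw [hq', hdiv, hmod]
          exact cms_disj m hm _ _ r (r + d) hrm hcase2 (Or.inl ⟨rfl, by omega⟩)
        · -- next block, no wrap
          have hx : p + d = m * (a + 1) + (r + d - m) := by
            rw [Nat.mul_succ]
            omega
          obtain ⟨hdiv, hmod⟩ := hdm (p + d) (a + 1) (r + d - m) hx (by omega)
          rw [hq', hdiv, hmod]
          refine cms_disj m hm _ _ r (r + d - m) hrm (by omega) (Or.inr ⟨?_, by omega⟩)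
          push_cast
          ring
      · -- wrap around: p is in the last block
        push_neg at hcase1
        rw [hN] at hcase1
        have h2m : a = 2 * m := by
          by_contra hne
          have h1 : a + 1 ≤ 2 * m := by omega
          have h2 : m * (a + 1) ≤ m * (2 * m) := Nat.mul_le_mul_left m h1
          have h3 : m * (a + 1) = m * a + m := by ring
          have h4 : m * (2 * m) = 2 * m ^ 2 := by ring
          rw [h3, h4] at h2
          omega
        have hA : m * a = 2 * m ^ 2 := by rw [h2m]; ring
        rw [hA] at hpam
        have hrd : m ≤ r + d := by omega
        have hq' : t'.val = r + d - m := by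
          have h7 : p + d = N + (r + d - m) := by rw [hN]; omega
          rw [hq, h7, Nat.add_mod_left, Nat.mod_eq_of_lt (by omega)]
        obtain ⟨hdiv, hmod⟩ := hdm (r + d - m) 0 (r + d - m) (by omega) (by omega)
        rw [hq', hdiv, hmod]
        refine cms_disj m hm _ _ r (r + d - m) hrm (by omega) (Or.inr ⟨?_, by omega⟩)
        rw [h2m]
        have hc1 : ((2 * m : ℕ) : ZMod n) + 1 = ((2 * m + 1 : ℕ) : ZMod n) := by
          push_cast
          ring
        rw [Nat.cast_zero, hc1]
        exact (ZMod.natCast_self n).symm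
    intro i j k hj hk hjk
    rcases lt_trichotomy j k with h | h | h
    · exact main i j k hj hk h
    · exact absurd h hjk
    · exact fun v hv hv' => main i k j hk hj h v hv' hv
  constructor
  · exact ⟨f, hgood⟩
  · have hcount : edgeCount G = N := by
      rw [edgeCount, Nat.card_eq_fintype_card, hcard]
    have hbdd : BddAbove {d : ℕ | ∃ g : ZMod (edgeCount G) ≃ G.edgeSet, CyclicGood G g d} := by
      refine ⟨edgeCount G, fun d hdS => ?_⟩
      obtain ⟨g, hg⟩ := hdS
      by_contra hc
      push_neg at hc
      have h0 : edgeCount G ≠ 0 := by omega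
      have hcontr := hg 0 0 (edgeCount G) (by omega) hc (by omega)
      rw [ZMod.natCast_self] at hcontr
      simp only [Nat.cast_zero, add_zero] at hcontr
      exact hcontr _ (Sym2.out_fst_mem _) (Sym2.out_fst_mem _)
    have hmemS : (m - 1) ∈ {d : ℕ | ∃ g : ZMod (edgeCount G) ≃ G.edgeSet, CyclicGood G g d} := by
      have key : ∀ NN, NN = N → ∃ g : ZMod NN ≃ G.edgeSet, CyclicGood G g (m - 1) := by
        rintro _ rfl
        exact ⟨f, hgood⟩
      exact key _ hcount
    exact le_csSup hbdd hmemS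
end

section
/- For every integer m ≥ 2, there does not exist a cyclic ordering of the 2m² + m edges of the complete graph K_{2m+1} in which every m cyclically consecutive edges are pairwise disjoint; consequently cms(K_{2m+1}) ≤ m - 1. -/
/-!
Place the `N = m (2m + 1)` edges of `K_{2m+1}` at the positions of `ZMod N` so that any `m`
consecutive ones are disjoint. Then `m` consecutive edges miss exactly one vertex, and `m + 1`
consecutive edges cover every vertex (otherwise an edge would recur `m` places later). So
consecutive visits of a vertex are `m` or `m + 1` places apart, and each vertex is visited `2m`
times per period.

Let `s(v, w)` be the edge at `q`; its two ends never leave `q`, nor reach it, with the same gap,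
since the edge would recur. If `v` both reached and left `q` with gap `m`, then `w` did both with
gap `m + 1`, so the visit sequences of `v` and `w` after `q` cross, and where they meet the edge
`s(v, w)` would recur. Hence the gaps of every vertex alternate between `m` and `m + 1`, and every
edge recurs `2m + 1` places later, which is impossible as `2m + 1 < N`.
-/

open Finset

theorem Nat.nth_add_one_eq_of_forall_not {p : ℕ → Prop} (hp : (Set.ofPred p).Infinite)
    {k b : ℕ} (hlt : nth p k < b) (hb : p b) (hgap : ∀ t, nth p k < t → t < b → ¬p t) :
    nth p (k + 1) = b := by
  have hnext : nth p k < nth p (k + 1) := (nth_lt_nth hp).2 k.lt_succ_self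
  refine le_antisymm ?_ ?_
  · by_contra! h
    exact absurd (le_nth_of_lt_nth_succ h hb) (not_le.2 hlt)
  · by_contra! h
    exact hgap _ hnext h (nth_mem_of_infinite hp _)

theorem exists_eq_of_add_or_add_one {a b : ℕ → ℕ} {m : ℕ}
    (ha : ∀ k, a (k + 1) = a k + m ∨ a (k + 1) = a k + (m + 1))
    (hb : ∀ k, b (k + 1) = b k + m ∨ b (k + 1) = b k + (m + 1)) {i j : ℕ} (hij : i ≤ j)
    (hi : a i ≤ b i) (hj : b j ≤ a j) : ∃ k, i ≤ k ∧ k ≤ j ∧ a k = b k := by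
  induction j, hij using Nat.le_induction with
  | base => exact ⟨i, le_rfl, le_rfl, le_antisymm hi hj⟩
  | succ j hij ih =>
    by_cases h : b j ≤ a j
    · obtain ⟨k, hik, hkj, hk⟩ := ih h
      exact ⟨k, hik, hkj.trans j.le_succ, hk⟩
    · refine ⟨j + 1, hij.trans j.le_succ, le_rfl, ?_⟩
      rcases ha j with h1 | h1 <;> rcases hb j with h2 | h2 <;> omega

theorem ZMod.count_add_natCast_eq_card {N : ℕ} [NeZero N] (P : ZMod N → Prop) [DecidablePred P]
    (q : ZMod N) : Nat.count (fun t : ℕ => P (q + t)) N = #{p | P p} := by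
  rw [Nat.count_eq_card_filter_range]
  refine card_nbij (fun t => q + t) (fun t ht => by simpa using (mem_filter.1 ht).2) ?_ ?_
  · intro a ha b hb hab
    simp only [coe_filter, mem_range, Set.mem_ofPred_eq] at ha hb
    have := congrArg ZMod.val (add_left_cancel hab)
    rwa [ZMod.val_cast_of_lt ha.1, ZMod.val_cast_of_lt hb.1] at this
  · intro p hp
    refine ⟨(p - q).val, ?_, by simp⟩
    simp only [coe_filter, mem_range, Set.mem_ofPred_eq, ZMod.natCast_val, ZMod.cast_id',
      id_eq, add_sub_cancel]
    exact ⟨ZMod.val_lt _, by simpa using hp⟩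

theorem ZMod.natCast_ne_zero_of_lt {n a : ℕ} (ha : 0 < a) (han : a < n) : (a : ZMod n) ≠ 0 := by
  rw [Ne, ZMod.natCast_eq_zero_iff]
  exact fun h => ha.ne' (Nat.eq_zero_of_dvd_of_lt h han)

section

variable {V : Type*} {G : SimpleGraph V} {N m : ℕ} {f : ZMod N ≃ G.edgeSet}

theorem eq_of_mem_of_mem {p q : ZMod N} {v w : V} (hvw : v ≠ w)
    (hvp : v ∈ (f p : Sym2 V)) (hwp : w ∈ (f p : Sym2 V))
    (hvq : v ∈ (f q : Sym2 V)) (hwq : w ∈ (f q : Sym2 V)) : p = q :=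
  f.injective <| Subtype.ext <| by
    rw [(Sym2.mem_and_mem_iff hvw).1 ⟨hvp, hwp⟩, (Sym2.mem_and_mem_iff hvw).1 ⟨hvq, hwq⟩]

theorem exists_ne_mem_of_mem {q : ZMod N} {v : V} (hv : v ∈ (f q : Sym2 V)) :
    ∃ w, v ≠ w ∧ w ∈ (f q : Sym2 V) :=
  ⟨_, (G.edge_other_ne (f q).2 hv).symm, Sym2.other_mem hv⟩

theorem card_filter_mem_eq_degree [Fintype V] [DecidableEq V] [DecidableRel G.Adj] [NeZero N]
    (f : ZMod N ≃ G.edgeSet) (v : V) : #{p | v ∈ (f p : Sym2 V)} = G.degree v := by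
  rw [← G.card_incidenceFinset_eq_degree]
  refine card_bij (fun p _ => (f p : Sym2 V)) (fun p hp => ?_) ?_ ?_
  · simpa [SimpleGraph.incidenceSet] using (mem_filter.1 hp).2
  · exact fun p _ q _ h => f.injective (Subtype.ext h)
  · intro e he
    rw [SimpleGraph.mem_incidenceFinset] at he
    exact ⟨f.symm ⟨e, he.1⟩, by simpa using he.2, by simp⟩

theorem CyclicGood.mono_s11 {d d' : ℕ} (hf : CyclicGood G f d') (h : d ≤ d') : CyclicGood G f d :=
  fun i j k hj hk hjk => hf i j k (hj.trans_le h) (hk.trans_le h) hjk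

theorem CyclicGood.notMem_of_lt (hf : CyclicGood G f m) (p : ZMod N) {a b : ℕ} (hab : a < b)
    (hba : b < a + m) {v : V} (hv : v ∈ (f (p + a) : Sym2 V)) : v ∉ (f (p + b) : Sym2 V) := by
  have h := hf (p + a) 0 (b - a) (by omega) (by omega) (by omega) v
  rw [Nat.cast_zero, add_zero, Nat.cast_sub hab.le, add_add_sub_cancel] at h
  exact h hv

theorem CyclicGood.card_biUnion_range [DecidableEq V] (hf : CyclicGood G f m) (p : ZMod N) :
    #((range m).biUnion fun i => (f (p + i) : Sym2 V).toFinset) = 2 * m := by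
  rw [Finset.card_biUnion, sum_congr rfl fun i _ => Sym2.card_toFinset_of_not_isDiag _
    (G.not_isDiag_of_mem_edgeSet (f (p + (i : ℕ))).2), sum_const, card_range, smul_eq_mul,
    mul_comm]
  intro i hi j hj hij
  simp only [coe_range, Set.mem_Iio] at hi hj
  rw [Function.onFun, disjoint_left]
  intro x hxi hxj
  rw [Sym2.mem_toFinset] at hxi hxj
  rcases hij.lt_or_gt with h | h
  · exact hf.notMem_of_lt p h (by omega) hxi hxj
  · exact hf.notMem_of_lt p h (by omega) hxj hxi

theorem CyclicGood.exists_mem_of_card_eq [Fintype V] (hf : CyclicGood G f m)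
    (hV : Fintype.card V = 2 * m + 1) (hm : (m : ZMod N) ≠ 0) (q : ZMod N) (v : V) :
    ∃ j ≤ m, v ∈ (f (q + j) : Sym2 V) := by
  classical
  by_contra! h
  set T := (range m).biUnion fun i => (f (q + 1 + i) : Sym2 V).toFinset
  have hshift (i : ℕ) : q + 1 + i = q + (i + 1 : ℕ) := by push_cast; ring
  -- the `m` disjoint edges after `q` cover all `2m` vertices but `v`, so both ends of `f q` are
  -- on one of them, which can only be `f (q + m)`
  have hT : T = univ.erase v := by
    refine eq_of_subset_of_card_le (fun x hx => ?_) ?_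
    · obtain ⟨i, hi, hx⟩ := mem_biUnion.1 hx
      refine mem_erase.2 ⟨?_, mem_univ x⟩
      rintro rfl
      rw [Sym2.mem_toFinset, hshift] at hx
      exact h (i + 1) (by simp only [mem_range] at hi; omega) hx
    · rw [hf.card_biUnion_range, card_erase_of_mem (mem_univ v), card_univ, hV,
        Nat.add_sub_cancel]
  have hend : ∀ x ∈ (f q : Sym2 V), x ∈ (f (q + m) : Sym2 V) := by
    intro x hx
    have hx0 : x ∈ (f (q + (0 : ℕ)) : Sym2 V) := by simpa using hx
    have hxT : x ∈ T :=
      hT ▸ mem_erase.2 ⟨by rintro rfl; exact h 0 m.zero_le hx0, mem_univ x⟩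
    obtain ⟨i, hi, hxi⟩ := mem_biUnion.1 hxT
    rw [mem_range] at hi
    rw [Sym2.mem_toFinset, hshift] at hxi
    obtain rfl : i + 1 = m := by
      by_contra hne
      exact hf.notMem_of_lt q (by omega) (by omega) hx0 hxi
    exact hxi
  obtain ⟨x, hx⟩ : ∃ x, x ∈ (f q : Sym2 V) := ⟨_, Sym2.out_fst_mem _⟩
  obtain ⟨y, hxy, hy⟩ := exists_ne_mem_of_mem hx
  exact hm (left_eq_add.1 (eq_of_mem_of_mem hxy hx hy (hend x hx) (hend y hy)))

theorem CyclicGood.mem_add_or_mem_add [Fintype V] (hf : CyclicGood G f m)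
    (hV : Fintype.card V = 2 * m + 1) (hm : (m : ZMod N) ≠ 0) {q : ZMod N} {v : V}
    (hv : v ∈ (f q : Sym2 V)) :
    v ∈ (f (q + m) : Sym2 V) ∨ v ∈ (f (q + (m + 1 : ℕ)) : Sym2 V) := by
  obtain ⟨j, hj, hvj⟩ := hf.exists_mem_of_card_eq hV hm (q + 1) v
  rw [show q + 1 + j = q + (j + 1 : ℕ) by push_cast; ring] at hvj
  rcases lt_trichotomy (j + 1) m with h | h | h
  · exact absurd hvj (hf.notMem_of_lt q (a := 0) (by omega) (by omega) (by simpa using hv))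
  · exact .inl (h ▸ hvj)
  · exact .inr (by rwa [show j = m by omega] at hvj)

/-- `Nat.nth (IncidentAfter f v q) k` is the offset from `q` of the `k`-th visit of `v` at or after `q`. -/
def IncidentAfter (f : ZMod N ≃ G.edgeSet) (v : V) (q : ZMod N) (t : ℕ) : Prop :=
  v ∈ (f (q + t) : Sym2 V)

theorem incidentAfter_infinite [NeZero N] {q : ZMod N} {v : V} (hv : v ∈ (f q : Sym2 V)) :
    (Set.ofPred (IncidentAfter f v q)).Infinite := by
  refine Set.infinite_of_forall_exists_gt fun a => ⟨(a + 1) * N, ?_, ?_⟩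
  · simpa [IncidentAfter] using hv
  · nlinarith [NeZero.pos N]

theorem nth_incidentAfter_degree [Fintype V] [DecidableRel G.Adj] [NeZero N] {q : ZMod N}
    {v : V} (hv : v ∈ (f q : Sym2 V)) : Nat.nth (IncidentAfter f v q) (G.degree v) = N := by
  classical
  have hcount : Nat.count (IncidentAfter f v q) N = G.degree v := by
    rw [← card_filter_mem_eq_degree f v]
    convert ZMod.count_add_natCast_eq_card (fun p => v ∈ (f p : Sym2 V)) q using 2
    rfl
  rw [← hcount]
  exact Nat.nth_count (by simpa [IncidentAfter] using hv)

theorem CyclicGood.nth_incidentAfter_succ_of_mem [NeZero N] (hf : CyclicGood G f m) (hm : 0 < m)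
    {q : ZMod N} {v : V} (hv : v ∈ (f q : Sym2 V)) (k : ℕ)
    (h : IncidentAfter f v q (Nat.nth (IncidentAfter f v q) k + m)) :
    Nat.nth (IncidentAfter f v q) (k + 1) = Nat.nth (IncidentAfter f v q) k + m := by
  have hinf := incidentAfter_infinite hv
  refine Nat.nth_add_one_eq_of_forall_not hinf (by omega) h fun t ht1 ht2 => ?_
  exact hf.notMem_of_lt q ht1 ht2 (Nat.nth_mem_of_infinite hinf k)

theorem CyclicGood.nth_incidentAfter_succ_of_notMem [Fintype V] [NeZero N]
    (hf : CyclicGood G f m) (hV : Fintype.card V = 2 * m + 1) (hm : (m : ZMod N) ≠ 0)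
    {q : ZMod N} {v : V} (hv : v ∈ (f q : Sym2 V)) (k : ℕ)
    (h : ¬IncidentAfter f v q (Nat.nth (IncidentAfter f v q) k + m)) :
    Nat.nth (IncidentAfter f v q) (k + 1) = Nat.nth (IncidentAfter f v q) k + (m + 1) := by
  have hinf := incidentAfter_infinite hv
  set a := Nat.nth (IncidentAfter f v q) k
  have ha : v ∈ (f (q + a) : Sym2 V) := Nat.nth_mem_of_infinite hinf k
  have hcast (s : ℕ) : IncidentAfter f v q (a + s) ↔ v ∈ (f (q + a + s) : Sym2 V) := by
    rw [IncidentAfter, Nat.cast_add, add_assoc]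
  have hnext := (hf.mem_add_or_mem_add hV hm ha).resolve_left ((hcast m).not.1 h)
  refine Nat.nth_add_one_eq_of_forall_not hinf (by omega) ((hcast _).2 hnext) fun t ht1 ht2 => ?_
  rcases (Nat.lt_succ_iff.1 ht2).lt_or_eq with ht | rfl
  · exact hf.notMem_of_lt q ht1 ht ha
  · exact h

theorem CyclicGood.nth_incidentAfter_succ_eq_or [Fintype V] [NeZero N] (hf : CyclicGood G f m)
    (hV : Fintype.card V = 2 * m + 1) (hm : (m : ZMod N) ≠ 0) {q : ZMod N} {v : V}
    (hv : v ∈ (f q : Sym2 V)) (k : ℕ) :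
    Nat.nth (IncidentAfter f v q) (k + 1) = Nat.nth (IncidentAfter f v q) k + m ∨
      Nat.nth (IncidentAfter f v q) (k + 1) = Nat.nth (IncidentAfter f v q) k + (m + 1) := by
  by_cases h : IncidentAfter f v q (Nat.nth (IncidentAfter f v q) k + m)
  · exact .inl (hf.nth_incidentAfter_succ_of_mem (Nat.pos_of_ne_zero (by rintro rfl; simp at hm))
      hv k h)
  · exact .inr (hf.nth_incidentAfter_succ_of_notMem hV hm hv k h)

theorem incidentAfter_sub_iff {q : ZMod N} {v : V} {t : ℕ} (ht : t ≤ N) :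
    IncidentAfter f v q (N - t) ↔ v ∈ (f (q - t) : Sym2 V) := by
  rw [IncidentAfter, Nat.cast_sub ht, ZMod.natCast_self, zero_sub, ← sub_eq_add_neg]

theorem CyclicGood.nth_incidentAfter_one_of_mem [NeZero N] (hf : CyclicGood G f m) (hm : 0 < m)
    {q : ZMod N} {v : V} (hv : v ∈ (f q : Sym2 V)) (hvm : v ∈ (f (q + m) : Sym2 V)) :
    Nat.nth (IncidentAfter f v q) 1 = m := by
  have h0 : Nat.nth (IncidentAfter f v q) 0 = 0 :=
    Nat.nth_zero_of_zero (by simpa [IncidentAfter] using hv)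
  simpa [h0] using hf.nth_incidentAfter_succ_of_mem hm hv 0 (by simpa [h0, IncidentAfter] using hvm)

theorem CyclicGood.nth_incidentAfter_one_of_notMem [Fintype V] [NeZero N]
    (hf : CyclicGood G f m) (hV : Fintype.card V = 2 * m + 1) (hm : (m : ZMod N) ≠ 0)
    {q : ZMod N} {v : V} (hv : v ∈ (f q : Sym2 V)) (hvm : v ∉ (f (q + m) : Sym2 V)) :
    Nat.nth (IncidentAfter f v q) 1 = m + 1 := by
  have h0 : Nat.nth (IncidentAfter f v q) 0 = 0 :=
    Nat.nth_zero_of_zero (by simpa [IncidentAfter] using hv)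
  simpa [h0] using hf.nth_incidentAfter_succ_of_notMem hV hm hv 0
    (by simpa [h0, IncidentAfter] using hvm)

end

section

variable {V : Type*} [Fintype V] {N m : ℕ} {f : ZMod N ≃ (⊤ : SimpleGraph V).edgeSet}

theorem card_eq_choose_two_of_equiv_edgeSet_top
    (f : ZMod N ≃ (⊤ : SimpleGraph V).edgeSet) : N = (Fintype.card V).choose 2 := by
  classical
  rw [← Nat.card_zmod N, Nat.card_congr f, Nat.card_eq_fintype_card,
    ← SimpleGraph.edgeFinset_card, SimpleGraph.card_edgeFinset_top_eq_card_choose_two]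

theorem card_eq_mul_of_equiv_edgeSet_top (f : ZMod N ≃ (⊤ : SimpleGraph V).edgeSet)
    (hV : Fintype.card V = 2 * m + 1) : N = m * (2 * m + 1) := by
  rw [card_eq_choose_two_of_equiv_edgeSet_top f, hV, Nat.choose_two_right, Nat.add_sub_cancel,
    show (2 * m + 1) * (2 * m) = 2 * (m * (2 * m + 1)) by ring, Nat.mul_div_cancel_left _ two_pos]

theorem three_mul_lt_of_equiv_edgeSet_top (f : ZMod N ≃ (⊤ : SimpleGraph V).edgeSet)
    (hV : Fintype.card V = 2 * m + 1) (hm : 2 ≤ m) : 3 * m < N := by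
  nlinarith [card_eq_mul_of_equiv_edgeSet_top f hV]

theorem nth_incidentAfter_two_mul [NeZero N] (hV : Fintype.card V = 2 * m + 1) {q : ZMod N}
    {v : V} (hv : v ∈ (f q : Sym2 V)) : Nat.nth (IncidentAfter f v q) (2 * m) = N := by
  classical
  simpa [hV] using nth_incidentAfter_degree hv

theorem CyclicGood.nth_incidentAfter_two_mul_sub_one (hf : CyclicGood ⊤ f m)
    (hV : Fintype.card V = 2 * m + 1) (hm : 2 ≤ m) [NeZero N] {q : ZMod N} {v : V}
    (hv : v ∈ (f q : Sym2 V)) :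
    Nat.nth (IncidentAfter f v q) (2 * m - 1) = N - m ∨
      Nat.nth (IncidentAfter f v q) (2 * m - 1) = N - (m + 1) := by
  have hmN : (m : ZMod N) ≠ 0 :=
    ZMod.natCast_ne_zero_of_lt (by omega) (by linarith [three_mul_lt_of_equiv_edgeSet_top f hV hm])
  have h := hf.nth_incidentAfter_succ_eq_or hV hmN hv (2 * m - 1)
  rw [Nat.sub_add_cancel (by omega), nth_incidentAfter_two_mul hV hv] at h
  omega

theorem CyclicGood.mem_sub_of_mem_add (hf : CyclicGood ⊤ f m) (hV : Fintype.card V = 2 * m + 1)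
    (hm : 2 ≤ m) {q : ZMod N} {v : V} (hv : v ∈ (f q : Sym2 V))
    (hvm : v ∈ (f (q + m) : Sym2 V)) : v ∈ (f (q - (m + 1 : ℕ)) : Sym2 V) := by
  have hN := three_mul_lt_of_equiv_edgeSet_top f hV hm
  have : NeZero N := ⟨by omega⟩
  have hmN : (m : ZMod N) ≠ 0 := ZMod.natCast_ne_zero_of_lt (by omega) (by omega)
  obtain ⟨w, hvw, hw⟩ := exists_ne_mem_of_mem hv
  have apart (t : ℕ) (ht0 : 0 < t) (htN : t < N) (hvt : IncidentAfter f v q t) :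
      ¬IncidentAfter f w q t := fun hwt =>
    ZMod.natCast_ne_zero_of_lt ht0 htN (left_eq_add.1 (eq_of_mem_of_mem hvw hv hw hvt hwt))
  have hv1 := hf.nth_incidentAfter_one_of_mem (by omega) hv hvm
  have hw1 := hf.nth_incidentAfter_one_of_notMem hV hmN hw (apart m (by omega) (by omega) hvm)
  have hmemv := Nat.nth_mem_of_infinite (incidentAfter_infinite hv)
  have hmemw := Nat.nth_mem_of_infinite (incidentAfter_infinite hw)
  by_contra h
  have hvl : Nat.nth (IncidentAfter f v q) (2 * m - 1) = N - m :=
    (hf.nth_incidentAfter_two_mul_sub_one hV hm hv).resolve_right fun hl =>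
      h ((incidentAfter_sub_iff (by omega)).1 (hl ▸ hmemv _))
  have hwl : Nat.nth (IncidentAfter f w q) (2 * m - 1) = N - (m + 1) :=
    (hf.nth_incidentAfter_two_mul_sub_one hV hm hw).resolve_left fun hl =>
      apart (N - m) (by omega) (by omega) (hvl ▸ hmemv _) (hl ▸ hmemw _)
  -- the visits of `v` start behind those of `w` and end ahead of them, so they meet
  obtain ⟨k, hk1, hk2, hk⟩ := exists_eq_of_add_or_add_one
    (hf.nth_incidentAfter_succ_eq_or hV hmN hv) (hf.nth_incidentAfter_succ_eq_or hV hmN hw)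
    (show 1 ≤ 2 * m - 1 by omega) (by omega) (by omega)
  have hlo := hv1 ▸ Nat.nth_monotone (incidentAfter_infinite hv) hk1
  have hhi := hvl ▸ Nat.nth_monotone (incidentAfter_infinite hv) hk2
  exact apart _ (by omega) (by omega) (hmemv k) (hk ▸ hmemw k)

theorem CyclicGood.mem_add_of_mem_sub (hf : CyclicGood ⊤ f m) (hV : Fintype.card V = 2 * m + 1)
    (hm : 2 ≤ m) {q : ZMod N} {v : V} (hv : v ∈ (f q : Sym2 V))
    (hvm : v ∈ (f (q - (m + 1 : ℕ)) : Sym2 V)) : v ∈ (f (q + m) : Sym2 V) := by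
  have hN := three_mul_lt_of_equiv_edgeSet_top f hV hm
  have hmN : (m : ZMod N) ≠ 0 := ZMod.natCast_ne_zero_of_lt (by omega) (by omega)
  have hm1N : ((m + 1 : ℕ) : ZMod N) ≠ 0 := ZMod.natCast_ne_zero_of_lt (by omega) (by omega)
  obtain ⟨w, hvw, hw⟩ := exists_ne_mem_of_mem hv
  by_contra h
  have hvm1 := (hf.mem_add_or_mem_add hV hmN hv).resolve_left h
  have hwm : w ∈ (f (q + m) : Sym2 V) := (hf.mem_add_or_mem_add hV hmN hw).resolve_right
    fun hwm1 => hm1N (left_eq_add.1 (eq_of_mem_of_mem hvw hv hw hvm1 hwm1))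
  exact hm1N (sub_eq_self.1
    (eq_of_mem_of_mem hvw hvm (hf.mem_sub_of_mem_add hV hm hw hwm) hv hw))

theorem CyclicGood.mem_add_two_mul_add_one (hf : CyclicGood ⊤ f m)
    (hV : Fintype.card V = 2 * m + 1) (hm : 2 ≤ m) {q : ZMod N} {v : V}
    (hv : v ∈ (f q : Sym2 V)) : v ∈ (f (q + (2 * m + 1 : ℕ)) : Sym2 V) := by
  have hmN : (m : ZMod N) ≠ 0 :=
    ZMod.natCast_ne_zero_of_lt (by omega) (by linarith [three_mul_lt_of_equiv_edgeSet_top f hV hm])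
  rcases hf.mem_add_or_mem_add hV hmN hv with h | h
  · have hnot : v ∉ (f (q + m + m) : Sym2 V) := fun h' => by
      have hprev := hf.mem_sub_of_mem_add hV hm h h'
      rw [show q + m - (m + 1 : ℕ) = q - 1 + (0 : ℕ) by push_cast; ring] at hprev
      exact hf.notMem_of_lt (q - 1) (b := 1) one_pos (by omega) hprev (by simpa using hv)
    have hnext := (hf.mem_add_or_mem_add hV hmN h).resolve_left hnot
    rwa [show q + m + (m + 1 : ℕ) = q + (2 * m + 1 : ℕ) by push_cast; ring] at hnext
  · have hnext := hf.mem_add_of_mem_sub hV hm h (by rwa [add_sub_cancel_right])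
    rwa [show q + (m + 1 : ℕ) + m = q + (2 * m + 1 : ℕ) by push_cast; ring] at hnext

theorem not_cyclicGood_top (hV : Fintype.card V = 2 * m + 1) (hm : 2 ≤ m)
    (f : ZMod N ≃ (⊤ : SimpleGraph V).edgeSet) : ¬CyclicGood ⊤ f m := by
  intro hf
  have hN := three_mul_lt_of_equiv_edgeSet_top f hV hm
  obtain ⟨v, hv⟩ : ∃ v, v ∈ (f 0 : Sym2 V) := ⟨_, Sym2.out_fst_mem _⟩
  obtain ⟨w, hvw, hw⟩ := exists_ne_mem_of_mem hv
  have hrep := eq_of_mem_of_mem hvw hv hw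
    (hf.mem_add_two_mul_add_one hV hm hv) (hf.mem_add_two_mul_add_one hV hm hw)
  exact ZMod.natCast_ne_zero_of_lt (a := 2 * m + 1) (by omega) (by omega) (left_eq_add.1 hrep)

end

/-- For every integer `m ≥ 2` there is no cyclic ordering of the
`2m² + m` edges of `K_{2m+1}` in which every `m` cyclically consecutive edges are
pairwise disjoint; consequently `cms (K_{2m+1}) ≤ m - 1`. -/
theorem cms_upper_bound_odd (m : ℕ) (hm : 2 ≤ m) :
    (¬ ∃ f : ZMod (2 * m ^ 2 + m) ≃ (⊤ : SimpleGraph (Fin (2 * m + 1))).edgeSet,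
      CyclicGood (⊤ : SimpleGraph (Fin (2 * m + 1))) f m) ∧
    cms (⊤ : SimpleGraph (Fin (2 * m + 1))) ≤ m - 1 := by
  have hV : Fintype.card (Fin (2 * m + 1)) = 2 * m + 1 := Fintype.card_fin _
  refine ⟨fun ⟨f, hf⟩ => not_cyclicGood_top hV hm f hf, csSup_le' fun d ⟨f, hf⟩ => ?_⟩
  by_contra! hd
  exact not_cyclicGood_top hV hm f (hf.mono_s11 (by omega))
end

section
/- Let m ≥ 2 and suppose [1],[2],...,[2m²+m] is a cyclic ordering of the edges of K_{2m+1} in which every m cyclically consecutive edges are pairwise disjoint. For each index i, let M_{[i]} denote the set of the m edges [i],[i+1],...,[i+m-1] (indices modulo 2m²+m). Then each M_{[i]} is a near-perfect matching of K_{2m+1} leaving exactly one vertex uncovered, and the edge [i+m] joins the unique vertex not covered by M_{[i]} to one of the two vertices of the edge [i]. -/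
open Finset

lemma not_edgesDisjoint_self {V : Type*} (e : Sym2 V) : ¬ edgesDisjoint e e := by
  induction e using Sym2.ind with
  | _ a b => exact fun h => h a (Sym2.mem_mk_left a b) (Sym2.mem_mk_left a b)

lemma Sym2.exists_eq_mk_of_forall_mem {V : Type*} {e e₀ : Sym2 V} {v : V} (he : ¬ e.IsDiag)
    (hne : e ≠ e₀) (h : ∀ x ∈ e, x = v ∨ x ∈ e₀) : ∃ u, e = s(v, u) ∧ u ∈ e₀ := by
  induction e using Sym2.ind with
  | _ c d =>
    have hcd : c ≠ d := he
    rcases h c (Sym2.mem_mk_left c d) with rfl | hc <;>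
      rcases h d (Sym2.mem_mk_right c d) with rfl | hd
    · exact absurd rfl hcd
    · exact ⟨d, rfl, hd⟩
    · exact ⟨c, Sym2.eq_swap, hc⟩
    · exact absurd ((Sym2.mem_and_mem_iff hcd).mp ⟨hc, hd⟩).symm hne

lemma Finset.card_biUnion_toFinset_of_pairwise_disjoint {ι V : Type*} [DecidableEq V]
    {s : Finset ι} {e : ι → Sym2 V} (hdiag : ∀ j ∈ s, ¬ (e j).IsDiag)
    (hdisj : ∀ j ∈ s, ∀ k ∈ s, j ≠ k → edgesDisjoint (e j) (e k)) :
    #(s.biUnion fun j => (e j).toFinset) = 2 * #s := by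
  rw [card_biUnion fun j hj k hk hjk => disjoint_left.mpr fun v hv hv' =>
    hdisj j hj k hk hjk v (Sym2.mem_toFinset.mp hv) (Sym2.mem_toFinset.mp hv')]
  rw [sum_congr rfl fun j hj => Sym2.card_toFinset_of_not_isDiag _ (hdiag j hj), sum_const,
    smul_eq_mul, mul_comm]

lemma Finset.existsUnique_notMem_of_card_add_one {V : Type*} [Fintype V] [DecidableEq V]
    {t : Finset V} (ht : #t + 1 = Fintype.card V) : ∃! v, v ∉ t := by
  obtain ⟨v, hv⟩ := card_eq_one.mp (by rw [card_compl]; omega : #tᶜ = 1)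
  refine ⟨v, ?_, fun w hw => ?_⟩ <;> simp_all [← mem_compl]

namespace CyclicGood

variable {V : Type*} {G : SimpleGraph V} {N d : ℕ} {f : ZMod N ≃ G.edgeSet}

lemma coe_ne (hf : CyclicGood G f d) (i : ZMod N) {j k : ℕ} (hj : j < d) (hk : k < d)
    (hjk : j ≠ k) : (f (i + j) : Sym2 V) ≠ f (i + k) := fun h =>
  not_edgesDisjoint_self _ (h ▸ hf i j k hj hk hjk)

lemma existsUnique_forall_notMem [Fintype V] (hV : Fintype.card V = 2 * d + 1)
    (hf : CyclicGood G f d) (i : ZMod N) :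
    ∃! v : V, ∀ j < d, v ∉ (f (i + j) : Sym2 V) := by
  classical
  have hcard := card_biUnion_toFinset_of_pairwise_disjoint (s := range d)
    (e := fun j => (f (i + j) : Sym2 V)) (fun j _ => G.not_isDiag_of_mem_edgeSet (f _).2)
    (fun j hj k hk => hf i j k (mem_range.mp hj) (mem_range.mp hk))
  rw [card_range] at hcard
  simpa using existsUnique_notMem_of_card_add_one (t := (range d).biUnion fun j =>
    (f (i + j) : Sym2 V).toFinset) (by omega)

lemma eq_zero_of_mem_add (hf : CyclicGood G f d) {i : ZMod N} {j : ℕ} {x : V} (hj : j < d)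
    (hxj : x ∈ (f (i + j) : Sym2 V)) (hxd : x ∈ (f (i + d) : Sym2 V)) : j = 0 := by
  obtain _ | j := j
  · rfl
  obtain _ | d := d
  · omega
  have hshift : ∀ k : ℕ, i + ((k + 1 : ℕ) : ZMod N) = i + 1 + k := fun k => by push_cast; ring
  rw [hshift] at hxj hxd
  exact absurd hxd (hf (i + 1) j d (by omega) (by omega) (by omega) x hxj)

lemma coe_add_ne_self (hd : 0 < d) (hdN : d < N) (i : ZMod N) :
    (f (i + d) : Sym2 V) ≠ f i := fun h => by
  have : (d : ZMod N) = 0 := by simpa using f.injective (Subtype.ext h)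
  exact absurd (Nat.le_of_dvd hd ((ZMod.natCast_eq_zero_iff d N).mp this)) (by omega)

end CyclicGood

/-- Suppose `m ≥ 2` and `f` is a cyclic ordering of the `2m² + m`
edges of `K_{2m+1}` in which every `m` cyclically consecutive edges are pairwise
disjoint.  Then for each index `i`, the `m` edges `f(i), f(i+1), …, f(i+m-1)` are
distinct (so together with disjointness they form a near-perfect matching) leaving
exactly one vertex `v` uncovered, and the edge `f(i+m)` joins `v` to one of the two
vertices of the edge `f(i)`. -/
theorem near_perfect_matching_structure (m : ℕ) (hm : 2 ≤ m)
    (f : ZMod (2 * m ^ 2 + m) ≃ (⊤ : SimpleGraph (Fin (2 * m + 1))).edgeSet)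
    (hf : CyclicGood (⊤ : SimpleGraph (Fin (2 * m + 1))) f m) :
    ∀ i : ZMod (2 * m ^ 2 + m),
      (∀ j k : ℕ, j < m → k < m → j ≠ k →
        (f (i + (j : ZMod (2 * m ^ 2 + m))) : Sym2 (Fin (2 * m + 1))) ≠
          (f (i + (k : ZMod (2 * m ^ 2 + m))) : Sym2 (Fin (2 * m + 1)))) ∧
      (∃! v : Fin (2 * m + 1), ∀ j : ℕ, j < m →
        v ∉ (f (i + (j : ZMod (2 * m ^ 2 + m))) : Sym2 (Fin (2 * m + 1)))) ∧
      (∀ v : Fin (2 * m + 1),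
        (∀ j : ℕ, j < m → v ∉ (f (i + (j : ZMod (2 * m ^ 2 + m))) : Sym2 (Fin (2 * m + 1)))) →
        ∃ u : Fin (2 * m + 1),
          (f (i + (m : ZMod (2 * m ^ 2 + m))) : Sym2 (Fin (2 * m + 1))) = s(v, u) ∧
          u ∈ (f i : Sym2 (Fin (2 * m + 1)))) := by
  intro i
  have huniq := hf.existsUnique_forall_notMem (Fintype.card_fin _) i
  refine ⟨fun j k => hf.coe_ne i, huniq, fun v hv => ?_⟩
  refine Sym2.exists_eq_mk_of_forall_mem (SimpleGraph.not_isDiag_of_mem_edgeSet _ (f _).2)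
    (CyclicGood.coe_add_ne_self (by omega) (by nlinarith) i) fun x hx => ?_
  by_cases hcovered : ∃ j < m, x ∈ (f (i + j) : Sym2 (Fin (2 * m + 1)))
  · obtain ⟨j, hj, hxj⟩ := hcovered
    obtain rfl := hf.eq_zero_of_mem_add hj hxj hx
    simpa using Or.inr hxj
  · push Not at hcovered
    exact Or.inl (huniq.unique hcovered hv)
end

section
/- Let m ≥ 2 and suppose [1],[2],...,[2m²+m] is a cyclic ordering of the edges of K_{2m+1} in which every m cyclically consecutive edges are pairwise disjoint. For each i with 1 ≤ i ≤ m, the 2m+1 sets of edges M_{[i+km]} = {[i+km],[i+km+1],...,[i+km+m-1]} for k = 0,1,...,2m (indices modulo 2m²+m) are near-perfect matchings that partition the edge set of K_{2m+1}, and every vertex of K_{2m+1} is the isolated vertex of exactly one of these 2m+1 matchings. -/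
/-!
Cut the cyclic ordering, starting at position `i`, into `2m + 1` rows of `m` consecutive edges:
this is a bijection from `Fin (2m+1) × Fin m` onto the edges, and every row is a matching.
The `m` disjoint edges of a row cover `2m` of the `2m + 1` vertices, so exactly one is left
isolated. A vertex `v` lies on `2m` edges, no two of them in the same row, so `v` meets exactly
`2m` of the `2m + 1` rows and is isolated in exactly one.
-/

open Finset

lemma existsUnique_fin_iff {n : ℕ} {P : ℕ → Prop} :
    (∃! k : Fin n, P k) ↔ ∃! k : ℕ, k < n ∧ P k := by
  constructor
  · rintro ⟨k, hk, huniq⟩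
    exact ⟨k, ⟨k.isLt, hk⟩, fun l ⟨hl, hPl⟩ ↦ congrArg Fin.val (huniq ⟨l, hl⟩ hPl)⟩
  · rintro ⟨k, ⟨hk, hPk⟩, huniq⟩
    exact ⟨⟨k, hk⟩, hPk, fun l hPl ↦ Fin.ext (huniq l ⟨l.isLt, hPl⟩)⟩

lemma existsUnique_fst_of_mem_edgeSet {V α β : Type*} {G : SimpleGraph V}
    (E : α × β ≃ G.edgeSet) {e : Sym2 V} (he : e ∈ G.edgeSet) :
    ∃! a, ∃ b, e = (E (a, b) : Sym2 V) :=
  ⟨(E.symm ⟨e, he⟩).1, ⟨(E.symm ⟨e, he⟩).2, by simp⟩, by rintro a ⟨b, rfl⟩; simp⟩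

lemma bijective_natCast_add_mul_add {q m N : ℕ} [NeZero N] (hN : q * m = N) (i : ℕ) :
    Function.Bijective fun p : Fin q × Fin m ↦ ((i + p.1 * m + p.2 : ℕ) : ZMod N) := by
  refine (Fintype.bijective_iff_injective_and_card _).2 ⟨?_, by simp [hN]⟩
  rintro ⟨k, j⟩ ⟨k', j'⟩ h
  have hlt : ∀ (k : Fin q) (j : Fin m), (k : ℕ) * m + j < N := fun k j ↦ by
    rw [← hN]; nlinarith [k.isLt, j.isLt]
  have h' : ((k * m + j : ℕ) : ZMod N) = ((k' * m + j' : ℕ) : ZMod N) := by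
    simp only [add_assoc, Nat.cast_add (R := ZMod N) i] at h
    exact add_left_cancel h
  have hval := congrArg ZMod.val h'
  rw [ZMod.val_cast_of_lt (hlt k j), ZMod.val_cast_of_lt (hlt k' j')] at hval
  have hm : 0 < m := j.pos
  have hk : (k : ℕ) = k' := by
    have := congrArg (· / m) hval
    simpa [Nat.add_comm _ (j : ℕ), Nat.add_comm _ (j' : ℕ), Nat.add_mul_div_right _ _ hm,
      Nat.div_eq_of_lt j.isLt, Nat.div_eq_of_lt j'.isLt] using this
  rw [hk] at hval
  simp only [Prod.mk.injEq, Fin.ext_iff]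
  omega

section Matchings

variable {V : Type*} [DecidableEq V] {G : SimpleGraph V}

lemma card_biUnion_toFinset_of_pairwise_edgesDisjoint {ι : Type*} [Fintype ι]
    (e : ι → G.edgeSet) (he : Pairwise fun a b ↦ edgesDisjoint (e a : Sym2 V) (e b)) :
    #(univ.biUnion fun a ↦ (e a : Sym2 V).toFinset) = 2 * Fintype.card ι := by
  rw [card_biUnion]
  · simp [Sym2.card_toFinset_of_not_isDiag _ (G.not_isDiag_of_mem_edgeSet (e _).2), mul_comm]
  · intro a _ b _ hab
    rw [Function.onFun, disjoint_left]
    intro v hva hvb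
    exact he hab v (Sym2.mem_toFinset.1 hva) (Sym2.mem_toFinset.1 hvb)

variable [Fintype V]

lemma card_filter_forall_notMem_add_two_mul {ι : Type*} [Fintype ι]
    (e : ι → G.edgeSet) (he : Pairwise fun a b ↦ edgesDisjoint (e a : Sym2 V) (e b)) :
    #{v | ∀ a, v ∉ (e a : Sym2 V)} + 2 * Fintype.card ι = Fintype.card V := by
  have hcompl : ({v | ∀ a, v ∉ (e a : Sym2 V)} : Finset V) =
      (univ.biUnion fun a ↦ (e a : Sym2 V).toFinset)ᶜ := by
    ext v
    simp
  rw [hcompl, ← card_biUnion_toFinset_of_pairwise_edgesDisjoint e he, card_compl_add_card]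

lemma existsUnique_forall_notMem {ι : Type*} [Fintype ι]
    (e : ι → G.edgeSet) (he : Pairwise fun a b ↦ edgesDisjoint (e a : Sym2 V) (e b))
    (hV : Fintype.card V = 2 * Fintype.card ι + 1) :
    ∃! v, ∀ a, v ∉ (e a : Sym2 V) := by
  have hcard := card_filter_forall_notMem_add_two_mul e he
  have hone : #{v | ∀ a, v ∉ (e a : Sym2 V)} = 1 := by omega
  simpa using card_eq_one_iff_existsUnique.1 hone

variable [DecidableRel G.Adj] {α β : Type*} [Fintype α] [DecidableEq α] [Fintype β]
  (E : α × β ≃ G.edgeSet)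
  (hE : ∀ k, Pairwise fun j j' ↦ edgesDisjoint (E (k, j) : Sym2 V) (E (k, j')))
include hE

lemma card_filter_forall_notMem_add_degree (v : V) :
    #{k | ∀ j, v ∉ (E (k, j) : Sym2 V)} + G.degree v = Fintype.card α := by
  have hpairs : #{p | v ∈ (E p : Sym2 V)} = G.degree v := by
    rw [← G.card_incidenceFinset_eq_degree]
    refine card_bij (fun p _ ↦ (E p : Sym2 V)) ?_
      (fun p _ p' _ h ↦ E.injective (Subtype.ext h)) ?_
    · intro p hp
      exact (G.mem_incidenceFinset v _).2 ⟨(E p).2, (mem_filter.1 hp).2⟩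
    · intro e he
      obtain ⟨he, hv⟩ := (G.mem_incidenceFinset v e).1 he
      exact ⟨E.symm ⟨e, he⟩, by simpa using hv, by simp⟩
  have hrows : #{k | ∃ j, v ∈ (E (k, j) : Sym2 V)} = #{p | v ∈ (E p : Sym2 V)} := by
    rw [← card_image_of_injOn (f := Prod.fst)]
    · congr 1
      ext k
      simp
    · rintro ⟨k, j⟩ hj ⟨k', j'⟩ hj' (rfl : k = k')
      by_contra hne
      have hjj : j ≠ j' := fun h ↦ hne (by rw [h])
      exact hE k hjj v (mem_filter.1 hj).2 (mem_filter.1 hj').2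
  rw [← hpairs, ← hrows, add_comm]
  simpa using card_filter_add_card_filter_not (s := univ) fun k ↦ ∃ j, v ∈ (E (k, j) : Sym2 V)

lemma existsUnique_fst_forall_notMem (v : V) (hv : G.degree v + 1 = Fintype.card α) :
    ∃! k, ∀ j, v ∉ (E (k, j) : Sym2 V) := by
  have hcard := card_filter_forall_notMem_add_degree E hE v
  have hone : #{k | ∀ j, v ∉ (E (k, j) : Sym2 V)} = 1 := by omega
  simpa using card_eq_one_iff_existsUnique.1 hone

end Matchings

theorem near_perfect_matching_partition_general (m : ℕ)
    (f : ZMod (2 * m ^ 2 + m) ≃ (⊤ : SimpleGraph (Fin (2 * m + 1))).edgeSet)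
    (hf : CyclicGood (⊤ : SimpleGraph (Fin (2 * m + 1))) f m) :
    ∀ i : ℕ, 1 ≤ i → i ≤ m →
      (∀ k : ℕ, k ≤ 2 * m → ∃! v : Fin (2 * m + 1), ∀ j : ℕ, j < m →
        v ∉ (f ((i + k * m + j : ℕ) : ZMod (2 * m ^ 2 + m)) : Sym2 (Fin (2 * m + 1)))) ∧
      (∀ e ∈ (⊤ : SimpleGraph (Fin (2 * m + 1))).edgeSet, ∃! k : ℕ, k ≤ 2 * m ∧
        ∃ j : ℕ, j < m ∧
          e = (f ((i + k * m + j : ℕ) : ZMod (2 * m ^ 2 + m)) : Sym2 (Fin (2 * m + 1)))) ∧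
      (∀ v : Fin (2 * m + 1), ∃! k : ℕ, k ≤ 2 * m ∧ ∀ j : ℕ, j < m →
        v ∉ (f ((i + k * m + j : ℕ) : ZMod (2 * m ^ 2 + m)) : Sym2 (Fin (2 * m + 1)))) := by
  intro i hi him
  have : NeZero (2 * m ^ 2 + m) := ⟨by nlinarith⟩
  let E := Equiv.ofBijective _
    (f.bijective.comp (bijective_natCast_add_mul_add (q := 2 * m + 1) (by ring) i))
  have hEapply : ∀ k j, (E (k, j) : Sym2 (Fin (2 * m + 1))) = f ((i + k * m + j : ℕ)) :=
    fun _ _ ↦ rfl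
  have hE : ∀ k, Pairwise fun j j' ↦
      edgesDisjoint (E (k, j) : Sym2 (Fin (2 * m + 1))) (E (k, j')) := by
    intro k j j' hjj
    have := hf ((i + k * m : ℕ) : ZMod _) j j' j.isLt j'.isLt (Fin.val_ne_of_ne hjj)
    simpa [hEapply, add_assoc] using this
  simp only [← Nat.lt_add_one_iff (n := 2 * m)]
  refine ⟨fun k hk ↦ ?_, fun e he ↦ ?_, fun v ↦ ?_⟩
  · have := existsUnique_forall_notMem (fun j ↦ E (⟨k, hk⟩, j)) (hE _) (by simp)
    simpa only [hEapply, Fin.forall_iff] using this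
  · have := existsUnique_fst_of_mem_edgeSet E he
    simp only [hEapply, Fin.exists_iff, exists_prop] at this
    exact existsUnique_fin_iff.1 this
  · have := existsUnique_fst_forall_notMem E hE v (by simp)
    simp only [hEapply, Fin.forall_iff] at this
    exact existsUnique_fin_iff.1 this

/-- Suppose `m ≥ 2` and `f` is a cyclic ordering of the `2m² + m`
edges of `K_{2m+1}` in which every `m` cyclically consecutive edges are pairwise
disjoint.  For each `1 ≤ i ≤ m`, the `2m+1` blocks
`M_{[i+km]} = {f(i+km), …, f(i+km+m-1)}`, `k = 0, 1, …, 2m`, leave exactly one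
vertex uncovered each (so they are near-perfect matchings), they partition the edge
set of `K_{2m+1}` (every edge lies in exactly one block), and every vertex is the
uncovered (isolated) vertex of exactly one of the `2m+1` blocks. -/
theorem near_perfect_matching_partition (m : ℕ) (hm : 2 ≤ m)
    (f : ZMod (2 * m ^ 2 + m) ≃ (⊤ : SimpleGraph (Fin (2 * m + 1))).edgeSet)
    (hf : CyclicGood (⊤ : SimpleGraph (Fin (2 * m + 1))) f m) :
    ∀ i : ℕ, 1 ≤ i → i ≤ m →
      (∀ k : ℕ, k ≤ 2 * m → ∃! v : Fin (2 * m + 1), ∀ j : ℕ, j < m →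
        v ∉ (f ((i + k * m + j : ℕ) : ZMod (2 * m ^ 2 + m)) : Sym2 (Fin (2 * m + 1)))) ∧
      (∀ e ∈ (⊤ : SimpleGraph (Fin (2 * m + 1))).edgeSet, ∃! k : ℕ, k ≤ 2 * m ∧
        ∃ j : ℕ, j < m ∧
          e = (f ((i + k * m + j : ℕ) : ZMod (2 * m ^ 2 + m)) : Sym2 (Fin (2 * m + 1)))) ∧
      (∀ v : Fin (2 * m + 1), ∃! k : ℕ, k ≤ 2 * m ∧ ∀ j : ℕ, j < m →
        v ∉ (f ((i + k * m + j : ℕ) : ZMod (2 * m ^ 2 + m)) : Sym2 (Fin (2 * m + 1)))) :=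
  near_perfect_matching_partition_general m f hf
end
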